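/- arXiv:2010.08505 — 6 statements merged into one kernel-verified Lean document; each statement's English description precedes it below -/
import Mathlib

section
/- Let G be a planar grid diagram of size n with O-markings O. Suppose grid states x and y (viewed as permutations of {0,…,n−1}) agree in all columns except i < j, where x(i) = a < b = x(j), y(i) = b, y(j) = a. Let r = [i,j] × [a,b] be the rectangle with southwest corner (i,a) and northeast corner (j,b). Then M_O(x) − M_O(y) = 1 − 2·#(O ∩ r) + 2·#(x ∩ Int r), where #(O ∩ r) is the number of O-markings whose center lies in the interior of r and #(x ∩ Int r) is the number of components of x lying in the open rectangle (i,j) × (a,b). -/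
/-!
Since `J(A, A) = I(A, A)` and `2 J(x, O) = I(x, O) + I(O, x)`, the difference `M_O(x) - M_O(y)` is
a sum of three differences of `I`-counts. As `x` and `y` differ only in columns `i` and `j`,
only pairs involving one of these columns contribute, and each contribution is a mixed second
difference of quadrant indicators, i.e. an indicator of the rectangle `r`. Every `O` in `r`
is counted once by `I(x, O)` and once by `I(O, x)`; in `I(x, x)` the pair of columns `(i, j)`
counts `1` and every point of `x` in the interior of `r` counts `2`.
-/

/-- `Ipairs A B` counts pairs `(a,b) ∈ A × B` with `b` strictly to the northeast of `a`. -/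
def Ipairs (A B : Finset (ℤ × ℤ)) : ℕ :=
  ((A ×ˢ B).filter (fun p => p.1.1 < p.2.1 ∧ p.1.2 < p.2.2)).card

/-- The symmetrization `J(A,B) = (I(A,B) + I(B,A))/2`. -/
def Jsym (A B : Finset (ℤ × ℤ)) : ℚ :=
  ((Ipairs A B : ℚ) + (Ipairs B A : ℚ)) / 2

/-- A grid state `x` (a permutation of `{0,…,n−1}`) as a planar point set,
in doubled coordinates: component of column `i` is `(2i, 2x(i))`. -/
def stateSet {n : ℕ} (x : Equiv.Perm (Fin n)) : Finset (ℤ × ℤ) :=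
  Finset.univ.image (fun i : Fin n => (2 * (i : ℤ), 2 * ((x i : ℕ) : ℤ)))

/-- The markings of a grid diagram encoded by a permutation `σ`, in doubled
coordinates: the marking of column `i` has center `(2i+1, 2σ(i)+1)`. -/
def markSet {n : ℕ} (σ : Equiv.Perm (Fin n)) : Finset (ℤ × ℤ) :=
  Finset.univ.image (fun i : Fin n => (2 * (i : ℤ) + 1, 2 * ((σ i : ℕ) : ℤ) + 1))

/-- The Maslov grading `M_O(x) = J(x,x) − 2J(x,O) + J(O,O) + 1`. -/
def maslov {n : ℕ} (σO : Equiv.Perm (Fin n)) (x : Equiv.Perm (Fin n)) : ℚ :=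
  Jsym (stateSet x) (stateSet x) - 2 * Jsym (stateSet x) (markSet σO)
    + Jsym (markSet σO) (markSet σO) + 1

open Finset

theorem Ipairs_image_eq_sum {α β : Type*} [Fintype α] [Fintype β] {f : α → ℤ × ℤ}
    {g : β → ℤ × ℤ} (hf : Function.Injective f) (hg : Function.Injective g) :
    (Ipairs (univ.image f) (univ.image g) : ℤ) =
      ∑ k, ∑ l, if (f k).1 < (g l).1 ∧ (f k).2 < (g l).2 then 1 else 0 := by
  rw [Ipairs, ← prodMap_image_product, univ_product_univ, filter_image,
    card_image_of_injective _ (hf.prodMap hg), natCast_card_filter, ← univ_product_univ,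
    sum_product]
  rfl

theorem sum_sub_sum_eq_of_eqOn_compl_pair {α β M : Type*} [Fintype α] [DecidableEq α]
    [AddCommGroup M] {i j : α} (hij : i ≠ j) {x y : α → β}
    (hagree : ∀ k, k ≠ i → k ≠ j → x k = y k) (F : α → β → M) :
    ∑ k, F k (x k) - ∑ k, F k (y k) = (F i (x i) - F i (y i)) + (F j (x j) - F j (y j)) := by
  rw [← sum_sub_distrib]
  exact Fintype.sum_eq_add i j hij fun k hk => by rw [hagree k hk.1 hk.2, sub_self]

theorem sum_sum_eq_of_eq_zero_off_pair {α M : Type*} [Fintype α] [DecidableEq α]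
    [AddCommGroup M] {i j : α} (hij : i ≠ j) (G : α → α → M)
    (hG : ∀ k l, k ≠ i → k ≠ j → l ≠ i → l ≠ j → G k l = 0) :
    ∑ k, ∑ l, G k l =
      ∑ l, (G i l + G j l + G l i + G l j) - (G i i + G i j + G j i + G j j) := by
  have h : ∑ k, (∑ l, G k l - (G k i + G k j)) =
      (∑ l, G i l - (G i i + G i j)) + (∑ l, G j l - (G j i + G j j)) :=
    Fintype.sum_eq_add i j hij fun k hk => by
      rw [Fintype.sum_eq_add i j hij fun l hl => hG k l hk.1 hk.2 hl.1 hl.2, sub_self]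
  simp only [sum_sub_distrib, sum_add_distrib] at h ⊢
  rw [sub_eq_iff_eq_add.1 h]
  abel

section SecondDifferences

variable {α β : Type*} [LinearOrder α] [LinearOrder β]

theorem quadrant_le_second_diff (i j : α) (a b : β) (l : α) (s : β) (hij : i < j) (hab : a < b) :
    ((if i ≤ l ∧ a ≤ s then (1 : ℤ) else 0) - (if i ≤ l ∧ b ≤ s then 1 else 0))
      + ((if j ≤ l ∧ b ≤ s then 1 else 0) - (if j ≤ l ∧ a ≤ s then 1 else 0))
    = if i ≤ l ∧ l < j ∧ a ≤ s ∧ s < b then 1 else 0 := by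
  split_ifs <;> grind

theorem quadrant_lt_second_diff (i j : α) (a b : β) (k : α) (s : β) (hij : i < j) (hab : a < b) :
    ((if k < i ∧ s < a then (1 : ℤ) else 0) - (if k < i ∧ s < b then 1 else 0))
      + ((if k < j ∧ s < b then 1 else 0) - (if k < j ∧ s < a then 1 else 0))
    = if i ≤ k ∧ k < j ∧ a ≤ s ∧ s < b then 1 else 0 := by
  split_ifs <;> grind

theorem quadrant_lt_second_diff_add_of_ne {i j l : α} {a b s : β} (hli : l ≠ i) (hlj : l ≠ j)
    (hsa : s ≠ a) (hsb : s ≠ b) (hij : i < j) (hab : a < b) :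
    ((if i < l ∧ a < s then (1 : ℤ) else 0) - (if i < l ∧ b < s then 1 else 0))
      + ((if j < l ∧ b < s then 1 else 0) - (if j < l ∧ a < s then 1 else 0))
      + ((if l < i ∧ s < a then 1 else 0) - (if l < i ∧ s < b then 1 else 0))
      + ((if l < j ∧ s < b then 1 else 0) - (if l < j ∧ s < a then 1 else 0))
    = 2 * if i < l ∧ l < j ∧ a < s ∧ s < b then 1 else 0 := by
  rcases hli.lt_or_gt with h1 | h1 <;> rcases hlj.lt_or_gt with h2 | h2 <;>
    rcases hsa.lt_or_gt with h3 | h3 <;> rcases hsb.lt_or_gt with h4 | h4 <;>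
    grind

variable [Fintype α] {x y : α → β} {i j : α} {a b : β}

theorem sum_le_sub_sum_le (hij : i < j) (hab : a < b) (hxi : x i = a) (hxj : x j = b)
    (hyi : y i = b) (hyj : y j = a) (hagree : ∀ k, k ≠ i → k ≠ j → x k = y k) (σ : α → β) :
    (∑ k, ∑ l, if k ≤ l ∧ x k ≤ σ l then (1 : ℤ) else 0)
        - (∑ k, ∑ l, if k ≤ l ∧ y k ≤ σ l then (1 : ℤ) else 0)
      = #{l | i ≤ l ∧ l < j ∧ a ≤ σ l ∧ σ l < b} := by
  rw [sum_comm, sum_comm (f := fun k l => if k ≤ l ∧ y k ≤ σ l then (1 : ℤ) else 0),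
    ← sum_sub_distrib, natCast_card_filter]
  refine sum_congr rfl fun l _ => ?_
  rw [sum_sub_sum_eq_of_eqOn_compl_pair hij.ne hagree
    (fun k s => if k ≤ l ∧ s ≤ σ l then (1 : ℤ) else 0), hxi, hxj, hyi, hyj]
  exact quadrant_le_second_diff i j a b l (σ l) hij hab

theorem sum_lt_sub_sum_lt (hij : i < j) (hab : a < b) (hxi : x i = a) (hxj : x j = b)
    (hyi : y i = b) (hyj : y j = a) (hagree : ∀ k, k ≠ i → k ≠ j → x k = y k) (σ : α → β) :
    (∑ k, ∑ l, if k < l ∧ σ k < x l then (1 : ℤ) else 0)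
        - (∑ k, ∑ l, if k < l ∧ σ k < y l then (1 : ℤ) else 0)
      = #{k | i ≤ k ∧ k < j ∧ a ≤ σ k ∧ σ k < b} := by
  rw [← sum_sub_distrib, natCast_card_filter]
  refine sum_congr rfl fun k _ => ?_
  rw [sum_sub_sum_eq_of_eqOn_compl_pair hij.ne hagree
    (fun l s => if k < l ∧ σ k < s then (1 : ℤ) else 0), hxi, hxj, hyi, hyj]
  exact quadrant_lt_second_diff i j a b k (σ k) hij hab

theorem sum_lt_lt_sub_sum_lt_lt (hx : Function.Injective x) (hij : i < j) (hab : a < b)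
    (hxi : x i = a) (hxj : x j = b) (hyi : y i = b) (hyj : y j = a)
    (hagree : ∀ k, k ≠ i → k ≠ j → x k = y k) :
    (∑ k, ∑ l, if k < l ∧ x k < x l then (1 : ℤ) else 0)
        - (∑ k, ∑ l, if k < l ∧ y k < y l then (1 : ℤ) else 0)
      = 1 + 2 * #{l | i < l ∧ l < j ∧ a < x l ∧ x l < b} := by
  set G : α → α → ℤ := fun k l =>
    (if k < l ∧ x k < x l then 1 else 0) - (if k < l ∧ y k < y l then 1 else 0) with hG
  have hG_off : ∀ k l, k ≠ i → k ≠ j → l ≠ i → l ≠ j → G k l = 0 := by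
    intro k l hki hkj hli hlj
    simp only [hG, hagree k hki hkj, hagree l hli hlj, sub_self]
  have hG_cross : ∀ l, G i l + G j l + G l i + G l j =
      2 * (if i < l ∧ l < j ∧ a < x l ∧ x l < b then 1 else 0)
        + ((if l = i then 1 else 0) + (if l = j then 1 else 0)) := by
    intro l
    rcases eq_or_ne l i with rfl | hli
    · simp [hG, hxi, hxj, hyi, hyj, hij, hab, hij.ne, hij.not_gt, hab.not_gt]
    rcases eq_or_ne l j with rfl | hlj
    · simp [hG, hxi, hxj, hyi, hyj, hij, hab, hij.ne', hij.not_gt, hab.not_gt]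
    have hsa : x l ≠ a := hxi ▸ hx.ne hli
    have hsb : x l ≠ b := hxj ▸ hx.ne hlj
    simp only [hG, hxi, hxj, hyi, hyj, ← hagree l hli hlj, if_neg hli, if_neg hlj, add_zero]
    exact quadrant_lt_second_diff_add_of_ne hli hlj hsa hsb hij hab
  have hG_corners : G i i + G i j + G j i + G j j = 1 := by
    simp [hG, hxi, hxj, hyi, hyj, hij, hab, hij.not_gt, hab.not_gt]
  simp only [← sum_sub_distrib]
  rw [sum_sum_eq_of_eq_zero_off_pair hij.ne G hG_off, sum_congr rfl fun l _ => hG_cross l,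
    hG_corners, sum_add_distrib, sum_add_distrib, ← mul_sum, ← natCast_card_filter]
  simp only [sum_ite_eq', mem_univ, if_true]
  ring

end SecondDifferences

section GridDiagram

variable {n : ℕ}

theorem stateSet_coords_injective (x : Equiv.Perm (Fin n)) :
    Function.Injective fun k : Fin n => (2 * (k : ℤ), 2 * ((x k : ℕ) : ℤ)) :=
  Function.Injective.of_comp (f := Prod.fst) fun k l h => Fin.ext (by simpa using h)

theorem markSet_coords_injective (σ : Equiv.Perm (Fin n)) :
    Function.Injective fun k : Fin n => (2 * (k : ℤ) + 1, 2 * ((σ k : ℕ) : ℤ) + 1) :=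
  Function.Injective.of_comp (f := Prod.fst) fun k l h => Fin.ext (by simpa using h)

theorem Ipairs_stateSet_stateSet (x : Equiv.Perm (Fin n)) :
    (Ipairs (stateSet x) (stateSet x) : ℤ) =
      ∑ k, ∑ l, if k < l ∧ x k < x l then 1 else 0 := by
  rw [stateSet, Ipairs_image_eq_sum (stateSet_coords_injective x) (stateSet_coords_injective x)]
  refine sum_congr rfl fun k _ => sum_congr rfl fun l _ => if_congr ?_ rfl rfl
  simp only [Fin.lt_def]
  omega

-- Doubled coordinates: `2k < 2l + 1 ↔ k ≤ l` and `2k + 1 < 2l ↔ k < l`.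
theorem Ipairs_stateSet_markSet (σ x : Equiv.Perm (Fin n)) :
    (Ipairs (stateSet x) (markSet σ) : ℤ) =
      ∑ k, ∑ l, if k ≤ l ∧ x k ≤ σ l then 1 else 0 := by
  rw [stateSet, markSet, Ipairs_image_eq_sum (stateSet_coords_injective x)
    (markSet_coords_injective σ)]
  refine sum_congr rfl fun k _ => sum_congr rfl fun l _ => if_congr ?_ rfl rfl
  simp only [Fin.le_def]
  omega

theorem Ipairs_markSet_stateSet (σ x : Equiv.Perm (Fin n)) :
    (Ipairs (markSet σ) (stateSet x) : ℤ) =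
      ∑ k, ∑ l, if k < l ∧ σ k < x l then 1 else 0 := by
  rw [stateSet, markSet, Ipairs_image_eq_sum (markSet_coords_injective σ)
    (stateSet_coords_injective x)]
  refine sum_congr rfl fun k _ => sum_congr rfl fun l _ => if_congr ?_ rfl rfl
  simp only [Fin.lt_def]
  omega

theorem maslov_sub_maslov (σ x y : Equiv.Perm (Fin n)) :
    maslov σ x - maslov σ y =
      (((Ipairs (stateSet x) (stateSet x) : ℤ) - Ipairs (stateSet y) (stateSet y)
        - ((Ipairs (stateSet x) (markSet σ) : ℤ) - Ipairs (stateSet y) (markSet σ))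
        - ((Ipairs (markSet σ) (stateSet x) : ℤ) - Ipairs (markSet σ) (stateSet y)) : ℤ) : ℚ) := by
  simp only [maslov, Jsym]
  push_cast
  ring

end GridDiagram

theorem stmt2 (n : ℕ) (σO : Equiv.Perm (Fin n)) (x y : Equiv.Perm (Fin n))
    (i j a b : Fin n) (hij : i < j) (hab : a < b)
    (hxi : x i = a) (hxj : x j = b) (hyi : y i = b) (hyj : y j = a)
    (hagree : ∀ k, k ≠ i → k ≠ j → x k = y k) :
    maslov σO x - maslov σO y =
      1 - 2 * ((Finset.univ.filter
          (fun k : Fin n => i ≤ k ∧ k < j ∧ a ≤ σO k ∧ σO k < b)).card : ℚ)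
        + 2 * ((Finset.univ.filter
          (fun k : Fin n => i < k ∧ k < j ∧ a < x k ∧ x k < b)).card : ℚ) := by
  rw [maslov_sub_maslov, Ipairs_stateSet_stateSet, Ipairs_stateSet_stateSet,
    Ipairs_stateSet_markSet, Ipairs_stateSet_markSet, Ipairs_markSet_stateSet,
    Ipairs_markSet_stateSet,
    sum_lt_lt_sub_sum_lt_lt x.injective hij hab hxi hxj hyi hyj hagree,
    sum_le_sub_sum_le hij hab hxi hxj hyi hyj hagree,
    sum_lt_sub_sum_lt hij hab hxi hxj hyi hyj hagree]
  push_cast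
  ring
end

section
/- Let G₁ and G₂ be planar grid diagrams of sizes n₁ and n₂ with O-marking permutations σ₁, σ₂, and let G' be the size-(n₁+n₂) grid diagram of their disjoint union obtained by placing G₂ in the lower-left block (columns and rows 0,…,n₂−1, with permutation σ₂) and G₁ in the upper-right block (columns and rows n₂,…,n₂+n₁−1, with σ'(n₂+i) = n₂+σ₁(i)). Then for any grid states x₁ of G₁ and x₂ of G₂, letting x₁ ∪ x₂ denote the induced grid state of G', one has M_{O'}(x₁ ∪ x₂) = M_{O₁}(x₁) + M_{O₂}(x₂) − 1. -/
/-- Maslov grading of a point set `S` with respect to markings `O`. -/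
def maslovSet (O S : Finset (ℤ × ℤ)) : ℚ :=
  Jsym S S - 2 * Jsym S O + Jsym O O + 1

/-- Shift a (doubled-coordinate) point set diagonally by `m` grid units. -/
def shiftSet (m : ℕ) (S : Finset (ℤ × ℤ)) : Finset (ℤ × ℤ) :=
  S.image (fun p => (p.1 + 2 * (m : ℤ), p.2 + 2 * (m : ℤ)))

section aux

lemma Ipairs_union_left {A B C : Finset (ℤ × ℤ)} (h : Disjoint A B) :
    Ipairs (A ∪ B) C = Ipairs A C + Ipairs B C := by
  unfold Ipairs
  rw [Finset.union_product, Finset.filter_union, Finset.card_union_of_disjoint]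
  refine Finset.disjoint_filter_filter ?_
  rw [Finset.disjoint_left]
  intro p hp hq
  simp only [Finset.mem_product] at hp hq
  exact (Finset.disjoint_left.mp h hp.1) hq.1

lemma Ipairs_union_right {A B C : Finset (ℤ × ℤ)} (h : Disjoint A B) :
    Ipairs C (A ∪ B) = Ipairs C A + Ipairs C B := by
  unfold Ipairs
  rw [Finset.product_union, Finset.filter_union, Finset.card_union_of_disjoint]
  refine Finset.disjoint_filter_filter ?_
  rw [Finset.disjoint_left]
  intro p hp hq
  simp only [Finset.mem_product] at hp hq
  exact (Finset.disjoint_left.mp h hp.2) hq.2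

lemma Ipairs_shift (m : ℕ) (A B : Finset (ℤ × ℤ)) :
    Ipairs (shiftSet m A) (shiftSet m B) = Ipairs A B := by
  unfold Ipairs
  apply Finset.card_bij'
    (fun p _ => ((p.1.1 - 2 * (m : ℤ), p.1.2 - 2 * (m : ℤ)),
                 (p.2.1 - 2 * (m : ℤ), p.2.2 - 2 * (m : ℤ))))
    (fun p _ => ((p.1.1 + 2 * (m : ℤ), p.1.2 + 2 * (m : ℤ)),
                 (p.2.1 + 2 * (m : ℤ), p.2.2 + 2 * (m : ℤ))))
  · intro p hp
    simp only [Finset.mem_filter, Finset.mem_product, shiftSet, Finset.mem_image] at hp ⊢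
    obtain ⟨⟨⟨a, ha, h1⟩, ⟨b, hb, h2⟩⟩, hlt⟩ := hp
    refine ⟨⟨?_, ?_⟩, ?_, ?_⟩
    · have : (p.1.1 - 2 * (m : ℤ), p.1.2 - 2 * (m : ℤ)) = a := by
        rw [← h1]; simp
      rw [this]; exact ha
    · have : (p.2.1 - 2 * (m : ℤ), p.2.2 - 2 * (m : ℤ)) = b := by
        rw [← h2]; simp
      rw [this]; exact hb
    · omega
    · omega
  · intro p hp
    simp only [Finset.mem_filter, Finset.mem_product, shiftSet, Finset.mem_image] at hp ⊢
    obtain ⟨⟨ha, hb⟩, hlt⟩ := hp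
    refine ⟨⟨⟨p.1, ha, rfl⟩, ⟨p.2, hb, rfl⟩⟩, ?_, ?_⟩ <;> omega
  · intro p hp; simp
  · intro p hp; simp

lemma Ipairs_all_ne {A B : Finset (ℤ × ℤ)}
    (h : ∀ a ∈ A, ∀ b ∈ B, a.1 < b.1 ∧ a.2 < b.2) :
    Ipairs A B = A.card * B.card := by
  unfold Ipairs
  rw [Finset.filter_true_of_mem, Finset.card_product]
  intro p hp
  rw [Finset.mem_product] at hp
  exact h p.1 hp.1 p.2 hp.2

lemma Ipairs_all_ne' {A B : Finset (ℤ × ℤ)}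
    (h : ∀ a ∈ A, ∀ b ∈ B, a.1 < b.1 ∧ a.2 < b.2) :
    Ipairs B A = 0 := by
  unfold Ipairs
  rw [Finset.card_eq_zero, Finset.filter_eq_empty_iff]
  intro p hp
  rw [Finset.mem_product] at hp
  have := h p.2 hp.2 p.1 hp.1
  omega

lemma stateSet_card {n : ℕ} (x : Equiv.Perm (Fin n)) : (stateSet x).card = n := by
  rw [stateSet, Finset.card_image_of_injective, Finset.card_univ, Fintype.card_fin]
  intro i j h
  simp only [Prod.mk.injEq] at h
  have : (i : ℤ) = (j : ℤ) := by omega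
  exact Fin.ext (by exact_mod_cast this)

lemma markSet_card {n : ℕ} (σ : Equiv.Perm (Fin n)) : (markSet σ).card = n := by
  rw [markSet, Finset.card_image_of_injective, Finset.card_univ, Fintype.card_fin]
  intro i j h
  simp only [Prod.mk.injEq] at h
  have : (i : ℤ) = (j : ℤ) := by omega
  exact Fin.ext (by exact_mod_cast this)

lemma stateSet_bounds {n : ℕ} (x : Equiv.Perm (Fin n)) :
    ∀ p ∈ stateSet x, 0 ≤ p.1 ∧ p.1 < 2 * n ∧ 0 ≤ p.2 ∧ p.2 < 2 * n := by
  intro p hp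
  simp only [stateSet, Finset.mem_image, Finset.mem_univ, true_and] at hp
  obtain ⟨i, hi⟩ := hp
  have h1 : (i : ℕ) < n := i.isLt
  have h2 : ((x i : ℕ)) < n := (x i).isLt
  subst hi
  constructor <;> [positivity; constructor]
  · push_cast; omega
  · constructor
    · positivity
    · push_cast; omega

lemma markSet_bounds {n : ℕ} (σ : Equiv.Perm (Fin n)) :
    ∀ p ∈ markSet σ, 0 ≤ p.1 ∧ p.1 < 2 * n ∧ 0 ≤ p.2 ∧ p.2 < 2 * n := by
  intro p hp
  simp only [markSet, Finset.mem_image, Finset.mem_univ, true_and] at hp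
  obtain ⟨i, hi⟩ := hp
  have h1 : (i : ℕ) < n := i.isLt
  have h2 : ((σ i : ℕ)) < n := (σ i).isLt
  subst hi
  refine ⟨by positivity, by push_cast; omega, by positivity, by push_cast; omega⟩

lemma shift_bounds {m : ℕ} {A : Finset (ℤ × ℤ)}
    (h : ∀ p ∈ A, 0 ≤ p.1 ∧ 0 ≤ p.2) :
    ∀ p ∈ shiftSet m A, 2 * (m : ℤ) ≤ p.1 ∧ 2 * (m : ℤ) ≤ p.2 := by
  intro p hp
  simp only [shiftSet, Finset.mem_image] at hp
  obtain ⟨a, ha, rfl⟩ := hp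
  have := h a ha
  constructor <;> simp <;> omega

/-- Master lemma for Ipairs of a block-diagonal union. -/
lemma Ipairs_block {m : ℕ} {A₁ A₂ B₁ B₂ : Finset (ℤ × ℤ)}
    (hA₂ : ∀ p ∈ A₂, p.1 < 2 * (m : ℤ) ∧ p.2 < 2 * (m : ℤ))
    (hB₂ : ∀ p ∈ B₂, p.1 < 2 * (m : ℤ) ∧ p.2 < 2 * (m : ℤ))
    (hA₁ : ∀ p ∈ A₁, 0 ≤ p.1 ∧ 0 ≤ p.2)
    (hB₁ : ∀ p ∈ B₁, 0 ≤ p.1 ∧ 0 ≤ p.2) :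
    Ipairs (A₂ ∪ shiftSet m A₁) (B₂ ∪ shiftSet m B₁) =
      Ipairs A₂ B₂ + Ipairs A₁ B₁ + A₂.card * B₁.card := by
  have hA₁' := shift_bounds (m := m) hA₁
  have hB₁' := shift_bounds (m := m) hB₁
  have hdA : Disjoint A₂ (shiftSet m A₁) := by
    rw [Finset.disjoint_left]
    intro p hp hq
    have := (hA₂ p hp).1
    have := (hA₁' p hq).1
    omega
  have hdB : Disjoint B₂ (shiftSet m B₁) := by
    rw [Finset.disjoint_left]
    intro p hp hq
    have := (hB₂ p hp).1
    have := (hB₁' p hq).1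
    omega
  have hne : ∀ a ∈ A₂, ∀ b ∈ shiftSet m B₁, a.1 < b.1 ∧ a.2 < b.2 := by
    intro a ha b hb
    have h1 := hA₂ a ha
    have h2 := hB₁' b hb
    omega
  have hne' : ∀ a ∈ B₂, ∀ b ∈ shiftSet m A₁, a.1 < b.1 ∧ a.2 < b.2 := by
    intro a ha b hb
    have h1 := hB₂ a ha
    have h2 := hA₁' b hb
    omega
  rw [Ipairs_union_left hdA, Ipairs_union_right hdB, Ipairs_union_right hdB,
    Ipairs_shift, Ipairs_all_ne hne, Ipairs_all_ne' hne']
  have : (shiftSet m B₁).card = B₁.card := by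
    rw [shiftSet, Finset.card_image_of_injective]
    intro p q h
    simp only [Prod.mk.injEq] at h
    exact Prod.ext (by omega) (by omega)
  rw [this]
  ring

end aux

theorem stmt5 (n₁ n₂ : ℕ) (σ₁ : Equiv.Perm (Fin n₁)) (σ₂ : Equiv.Perm (Fin n₂))
    (x₁ : Equiv.Perm (Fin n₁)) (x₂ : Equiv.Perm (Fin n₂)) :
    -- O-markings of the disjoint union: G₂ in the lower-left block,
    -- G₁ in the upper-right block (shifted by n₂)
    maslovSet (markSet σ₂ ∪ shiftSet n₂ (markSet σ₁))
        (stateSet x₂ ∪ shiftSet n₂ (stateSet x₁)) =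
      maslovSet (markSet σ₁) (stateSet x₁) +
      maslovSet (markSet σ₂) (stateSet x₂) - 1 := by
  have hS₂ : ∀ p ∈ stateSet x₂, p.1 < 2 * (n₂ : ℤ) ∧ p.2 < 2 * (n₂ : ℤ) :=
    fun p hp => ⟨(stateSet_bounds x₂ p hp).2.1, (stateSet_bounds x₂ p hp).2.2.2⟩
  have hO₂ : ∀ p ∈ markSet σ₂, p.1 < 2 * (n₂ : ℤ) ∧ p.2 < 2 * (n₂ : ℤ) :=
    fun p hp => ⟨(markSet_bounds σ₂ p hp).2.1, (markSet_bounds σ₂ p hp).2.2.2⟩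
  have hS₁ : ∀ p ∈ stateSet x₁, 0 ≤ p.1 ∧ 0 ≤ p.2 :=
    fun p hp => ⟨(stateSet_bounds x₁ p hp).1, (stateSet_bounds x₁ p hp).2.2.1⟩
  have hO₁ : ∀ p ∈ markSet σ₁, 0 ≤ p.1 ∧ 0 ≤ p.2 :=
    fun p hp => ⟨(markSet_bounds σ₁ p hp).1, (markSet_bounds σ₁ p hp).2.2.1⟩
  have e1 := Ipairs_block (m := n₂) hS₂ hS₂ hS₁ hS₁
  have e2 := Ipairs_block (m := n₂) hS₂ hO₂ hS₁ hO₁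
  have e3 := Ipairs_block (m := n₂) hO₂ hS₂ hO₁ hS₁
  have e4 := Ipairs_block (m := n₂) hO₂ hO₂ hO₁ hO₁
  simp only [maslovSet, Jsym, e1, e2, e3, e4, stateSet_card, markSet_card]
  push_cast
  ring
end

section
/- Let S be a finite subset of ℤ² and let o₁ = (a,b), o₂ = (c,d) ∈ S with a < c and b < d. Suppose no element of S lies in the open rectangle (a,c) × (b,d). Let S' = (S \ {o₁, o₂}) ∪ {(a,d), (c,b)} be obtained by interchanging the rows of o₁ and o₂. Then J(S', S') = J(S, S) − 1. -/
def ind (p q : ℤ × ℤ) : ℕ := if p.1 < q.1 ∧ p.2 < q.2 then 1 else 0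

lemma Ipairs_sum (A B : Finset (ℤ × ℤ)) :
    Ipairs A B = ∑ p ∈ A, ∑ q ∈ B, ind p q := by
  rw [Ipairs, Finset.card_filter, Finset.sum_product]
  rfl

theorem stmt7 (S : Finset (ℤ × ℤ)) (a b c d : ℤ)
    (h₁ : (a, b) ∈ S) (h₂ : (c, d) ∈ S) (hac : a < c) (hbd : b < d)
    -- no two points of S share a first or second coordinate
    (hinj : ∀ p ∈ S, ∀ q ∈ S, p ≠ q → p.1 ≠ q.1 ∧ p.2 ≠ q.2)
    -- no element of S lies in the open rectangle (a,c) × (b,d)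
    (hempty : ∀ p ∈ S, ¬(a < p.1 ∧ p.1 < c ∧ b < p.2 ∧ p.2 < d)) :
    let S' : Finset (ℤ × ℤ) := (S \ {(a, b), (c, d)}) ∪ {(a, d), (c, b)}
    Jsym S' S' = Jsym S S - 1 := by
  intro S'
  classical
  set T : Finset (ℤ × ℤ) := S \ {(a, b), (c, d)} with hT
  have hadS : ((a, d) : ℤ × ℤ) ∉ S := by
    intro h
    exact (hinj (a, d) h (a, b) h₁ (by simp [Prod.ext_iff]; omega)).1 rfl
  have hcbS : ((c, b) : ℤ × ℤ) ∉ S := by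
    intro h
    exact (hinj (c, b) h (a, b) h₁ (by simp [Prod.ext_iff]; omega)).2 rfl
  have hcoords : ∀ p ∈ T, p.1 ≠ a ∧ p.1 ≠ c ∧ p.2 ≠ b ∧ p.2 ≠ d := by
    intro p hp
    rw [hT, Finset.mem_sdiff] at hp
    obtain ⟨hpS, hpn⟩ := hp
    simp only [Finset.mem_insert, Finset.mem_singleton, not_or] at hpn
    exact ⟨(hinj p hpS (a, b) h₁ hpn.1).1, (hinj p hpS (c, d) h₂ hpn.2).1,
      (hinj p hpS (a, b) h₁ hpn.1).2, (hinj p hpS (c, d) h₂ hpn.2).2⟩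
  have hTS : ∀ p ∈ T, p ∈ S := by
    intro p hp; rw [hT, Finset.mem_sdiff] at hp; exact hp.1
  have hS : S = insert (a, b) (insert (c, d) T) := by
    ext x
    simp only [hT, Finset.mem_insert, Finset.mem_sdiff, Finset.mem_singleton, not_or]
    constructor
    · intro hx
      by_cases h1 : x = (a, b)
      · exact Or.inl h1
      by_cases h2 : x = (c, d)
      · exact Or.inr (Or.inl h2)
      exact Or.inr (Or.inr ⟨hx, h1, h2⟩)
    · rintro (rfl | rfl | ⟨hx, -⟩) <;> assumption
  have hS' : S' = insert (a, d) (insert (c, b) T) := by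
    show (S \ {(a, b), (c, d)}) ∪ {(a, d), (c, b)} = _
    rw [← hT]
    ext x
    simp only [Finset.mem_union, Finset.mem_insert, Finset.mem_singleton]
    tauto
  -- non-membership facts for sum_insert
  have hm2 : ((c, d) : ℤ × ℤ) ∉ T := by simp [hT]
  have hm1 : ((a, b) : ℤ × ℤ) ∉ insert ((c, d) : ℤ × ℤ) T := by
    simp only [Finset.mem_insert, not_or]
    refine ⟨by simp [Prod.ext_iff]; omega, by simp [hT]⟩
  have hm3 : ((c, b) : ℤ × ℤ) ∉ T := fun h => hcbS (hTS _ h)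
  have hm4 : ((a, d) : ℤ × ℤ) ∉ insert ((c, b) : ℤ × ℤ) T := by
    simp only [Finset.mem_insert, not_or]
    exact ⟨by simp [Prod.ext_iff]; omega, fun h => hadS (hTS _ h)⟩
  -- pointwise swap lemma
  have hswap : ∀ p ∈ T,
      ind (a, b) p + ind (c, d) p + (ind p (a, b) + ind p (c, d)) =
      ind (a, d) p + ind (c, b) p + (ind p (a, d) + ind p (c, b)) := by
    intro p hp
    obtain ⟨n1, n2, n3, n4⟩ := hcoords p hp
    have he := hempty p (hTS p hp)
    simp only [ind]
    split_ifs <;> omega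
  have key : Ipairs S S = Ipairs S' S' + 1 := by
    rw [Ipairs_sum, Ipairs_sum, hS, hS']
    rw [Finset.sum_insert hm1, Finset.sum_insert hm2,
        Finset.sum_insert hm4, Finset.sum_insert hm3]
    simp only [Finset.sum_insert hm1, Finset.sum_insert hm2,
        Finset.sum_insert hm4, Finset.sum_insert hm3]
    have e1 : ind (a, b) (a, b) = 0 := by simp [ind]
    have e2 : ind (a, b) (c, d) = 1 := by simp [ind, hac, hbd]
    have e3 : ind (c, d) (a, b) = 0 := by simp [ind]; omega
    have e4 : ind (c, d) (c, d) = 0 := by simp [ind]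
    have e5 : ind (a, d) (a, d) = 0 := by simp [ind]
    have e6 : ind (a, d) (c, b) = 0 := by simp [ind]; omega
    have e7 : ind (c, b) (a, d) = 0 := by simp [ind]; omega
    have e8 : ind (c, b) (c, b) = 0 := by simp [ind]
    rw [e1, e2, e3, e4, e5, e6, e7, e8]
    have hsum :
        ∑ p ∈ T, (ind (a, b) p + ind (c, d) p + (ind p (a, b) + ind p (c, d))) =
        ∑ p ∈ T, (ind (a, d) p + ind (c, b) p + (ind p (a, d) + ind p (c, b))) :=
      Finset.sum_congr rfl hswap
    simp only [Finset.sum_add_distrib] at hsum ⊢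
    omega
  show Jsym S' S' = Jsym S S - 1
  rw [Jsym, Jsym, key]
  push_cast
  ring
end

section
/- Let σ_X be a permutation of ℤ/n giving the X-markings of a toroidal grid diagram, with the X-marking of column i occupying the cell (i, σ_X(i)). Let x⁺ be the grid state consisting of the northeast corners of the X-markings, i.e. x⁺(i+1) = σ_X(i) + 1 for all i ∈ ℤ/n. Then for every grid state y and every rectangle r ∈ Rect(x⁺, y), the rectangle r contains an X-marking: specifically, if r has northeast corner (j, b) with x⁺(j) = b, then the cell (j−1, b−1), which carries the X-marking of column j−1, lies in r. Consequently x⁺ is a cycle for any grid differential counting only rectangles disjoint from the X-markings. -/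
/-- `c` lies in the cyclic interval `[i, j)` of `ℤ/n`. -/
def cycMem {n : ℕ} [NeZero n] (i j c : ZMod n) : Prop :=
  (c - i).val < (j - i).val

/-- The canonical grid state `x⁺` of northeast corners of the X-markings:
`x⁺(i+1) = σ_X(i) + 1`, i.e. `x⁺(i) = σ_X(i−1) + 1`. -/
def xplus {n : ℕ} (σX : Equiv.Perm (ZMod n)) : Equiv.Perm (ZMod n) :=
  ((Equiv.addRight (1 : ZMod n)).symm).trans (σX.trans (Equiv.addRight (1 : ZMod n)))

lemma aux_val {n : ℕ} [NeZero n] (d : ZMod n) (hd : d ≠ 0) : (d - 1).val < d.val := by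
  have h1 : 1 ≤ d.val := Nat.one_le_iff_ne_zero.mpr (fun h => hd (by rwa [← ZMod.val_eq_zero]))
  have hlt : d.val - 1 < n := lt_of_le_of_lt (Nat.sub_le _ _) (ZMod.val_lt d)
  have hcast : d - 1 = ((d.val - 1 : ℕ) : ZMod n) := by
    rw [Nat.cast_sub h1]
    simp [ZMod.natCast_val, ZMod.cast_id]
  rw [hcast, ZMod.val_natCast_of_lt hlt]
  omega

theorem stmt8 (n : ℕ) [NeZero n] (σX : Equiv.Perm (ZMod n))
    (y : Equiv.Perm (ZMod n)) (i j a b : ZMod n)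
    -- the rectangle r ∈ Rect(x⁺, y) with SW corner (i,a) and NE corner (j,b)
    (hij : i ≠ j) (hab : a ≠ b)
    (hxi : xplus σX i = a) (hxj : xplus σX j = b)
    (hyi : y i = b) (hyj : y j = a)
    (hagree : ∀ k, k ≠ i → k ≠ j → xplus σX k = y k) :
    -- the cell (j−1, b−1) carries the X-marking of column j−1, and lies in r
    σX (j - 1) = b - 1 ∧ cycMem i j (j - 1) ∧ cycMem a b (σX (j - 1)) := by
  have hσ : σX (j - 1) = b - 1 := by
    have : σX (j - 1) + 1 = b := by
      simpa [xplus, Equiv.trans_apply, sub_eq_add_neg] using hxj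
    linear_combination this
  refine ⟨hσ, ?_, ?_⟩
  · have h : j - 1 - i = (j - i) - 1 := by ring
    unfold cycMem
    rw [h]
    exact aux_val _ (sub_ne_zero.mpr (Ne.symm hij))
  · unfold cycMem
    rw [hσ]
    have h : b - 1 - a = (b - a) - 1 := by ring
    rw [h]
    exact aux_val _ (sub_ne_zero.mpr (Ne.symm hab))
end

section
/- Let 0 < p < q with gcd(p,q) = 1, n = p + q, and let G_{−p,q} be the standard planar grid diagram with σ_O(i) = i and σ_X(i) = (i + p) mod n for i ∈ {0,…,n−1}. Then the number of crossings of G_{−p,q} — pairs (i,j) with j strictly between σ_O(i) and σ_X(i) and i strictly between σ_O⁻¹(j) and σ_X⁻¹(j) — equals q(p − 1). -/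
/-- The number of crossings of the grid diagram with markings `σ_X`, `σ_O`:
pairs `(i, j)` such that row `j` lies strictly between the two rows
`σ_O(i)`, `σ_X(i)` of column `i`'s vertical segment, and column `i` lies
strictly between the two columns `σ_O⁻¹(j)`, `σ_X⁻¹(j)` of row `j`'s
horizontal segment. -/
def crossings {n : ℕ} (σX σO : Equiv.Perm (Fin n)) : ℕ :=
  ((Finset.univ : Finset (Fin n × Fin n)).filter (fun p =>
    (min (σO p.1) (σX p.1) < p.2 ∧ p.2 < max (σO p.1) (σX p.1)) ∧
    (min (σO.symm p.2) (σX.symm p.2) < p.1 ∧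
      p.1 < max (σO.symm p.2) (σX.symm p.2)))).card


/-- The standard grid diagram `G_{−p,q}` of the negative torus knot
(`0 < p < q`, `gcd(p,q) = 1`, grid size `n = p + q`, `σ_O = id`,
`σ_X(i) = (i + p) mod n`) has exactly `q(p − 1)` crossings. -/
theorem stmt12 (p q : ℕ) (hp : 0 < p) (hpq : p < q) (hgcd : Nat.gcd p q = 1)
    (σX : Equiv.Perm (Fin (p + q)))
    (hσX : ∀ i : Fin (p + q), (σX i : ℕ) = ((i : ℕ) + p) % (p + q)) :
    crossings σX 1 = q * (p - 1) := by
  have hn0 : 0 < p + q := by omega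
  have hsymm : ∀ j : Fin (p + q), ((σX.symm j : ℕ)) = ((j:ℕ) + q) % (p + q) := by
    intro j
    have hlt : ((j:ℕ) + q) % (p + q) < p + q := Nat.mod_lt _ hn0
    have h1 : σX ⟨((j:ℕ) + q) % (p + q), hlt⟩ = j := by
      apply Fin.ext
      rw [hσX]
      show (((j:ℕ) + q) % (p + q) + p) % (p + q) = (j:ℕ)
      rw [Nat.mod_add_mod]
      have h2 : (j:ℕ) + q + p = (j:ℕ) + (p + q) := by omega
      rw [h2, Nat.add_mod_right, Nat.mod_eq_of_lt j.isLt]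
    rw [(Equiv.symm_apply_eq σX).mpr h1.symm]
  -- the numeric predicate
  set C : ℕ → ℕ → Prop := fun a b =>
    (min a ((a+p) % (p+q)) < b ∧ b < max a ((a+p) % (p+q))) ∧
    (min b ((b+q) % (p+q)) < a ∧ a < max b ((b+q) % (p+q))) with hC
  have key : crossings σX 1 = ∑ a ∈ Finset.range (p+q), ∑ b ∈ Finset.range (p+q),
      (if C a b then 1 else 0) := by
    unfold crossings
    rw [Finset.card_filter, Fintype.sum_prod_type]
    rw [← Fin.sum_univ_eq_sum_range
      (fun a => ∑ b ∈ Finset.range (p+q), if C a b then 1 else 0) (p+q)]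
    apply Finset.sum_congr rfl
    intro i _
    rw [← Fin.sum_univ_eq_sum_range (fun b => if C (i:ℕ) b then 1 else 0) (p+q)]
    apply Finset.sum_congr rfl
    intro j _
    have hiff : ((min ((1 : Equiv.Perm (Fin (p+q))) i) (σX i) < j ∧
        j < max ((1 : Equiv.Perm (Fin (p+q))) i) (σX i)) ∧
        (min ((1 : Equiv.Perm (Fin (p+q))).symm j) (σX.symm j) < i ∧
          i < max ((1 : Equiv.Perm (Fin (p+q))).symm j) (σX.symm j))) ↔ C (i:ℕ) (j:ℕ) := by
      have e1 : ((1 : Equiv.Perm (Fin (p+q))) i) = i := rfl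
      have e2 : ((1 : Equiv.Perm (Fin (p+q))).symm j) = j := rfl
      rw [e1, e2, hC]
      simp only [Fin.lt_def]
      have vmin : ∀ a b : Fin (p+q), ((min a b : Fin (p+q)) : ℕ) = min (a:ℕ) (b:ℕ) :=
        fun a b => rfl
      have vmax : ∀ a b : Fin (p+q), ((max a b : Fin (p+q)) : ℕ) = max (a:ℕ) (b:ℕ) :=
        fun a b => rfl
      rw [vmin, vmax, vmin, vmax, hσX, hsymm]
    exact if_congr hiff rfl rfl
  have inner : ∀ a, a < p + q →
      (∑ b ∈ Finset.range (p+q), if C a b then 1 else 0) =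
        (if a < q then min (p-1) a else (p-1) - (a-q)) := by
    intro a ha
    rw [← Finset.card_filter]
    by_cases haq : a < q
    · have hxa : (a+p) % (p+q) = a + p := Nat.mod_eq_of_lt (by omega)
      have hfe : (Finset.range (p+q)).filter (C a) = Finset.Ioo (max a (p-1)) (a+p) := by
        ext b
        simp only [Finset.mem_filter, Finset.mem_range, Finset.mem_Ioo, hC, hxa]
        by_cases hbn : b < p + q
        · have hyb : (b+q) % (p+q) = if b < p then b + q else b + q - (p+q) := by
            rcases lt_or_ge (b+q) (p+q) with h | h
            · rw [Nat.mod_eq_of_lt h, if_pos (by omega)]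
            · rw [Nat.mod_eq_sub_mod h, Nat.mod_eq_of_lt (by omega), if_neg (by omega)]
          rw [hyb]
          split_ifs with hbp <;> omega
        · constructor
          · rintro ⟨h, _⟩; omega
          · intro h; exact absurd (by omega : b < p + q) hbn
      rw [hfe, Nat.card_Ioo, if_pos haq]
      omega
    · have hxa : (a+p) % (p+q) = a - q := by
        rw [Nat.mod_eq_sub_mod (by omega), Nat.mod_eq_of_lt (by omega)]
        omega
      have hfe : (Finset.range (p+q)).filter (C a) = Finset.Ioo (a-q) p := by
        ext b
        simp only [Finset.mem_filter, Finset.mem_range, Finset.mem_Ioo, hC, hxa]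
        by_cases hbn : b < p + q
        · have hyb : (b+q) % (p+q) = if b < p then b + q else b + q - (p+q) := by
            rcases lt_or_ge (b+q) (p+q) with h | h
            · rw [Nat.mod_eq_of_lt h, if_pos (by omega)]
            · rw [Nat.mod_eq_sub_mod h, Nat.mod_eq_of_lt (by omega), if_neg (by omega)]
          rw [hyb]
          split_ifs with hbp <;> omega
        · constructor
          · rintro ⟨h, _⟩; omega
          · intro h; exact absurd (by omega : b < p + q) hbn
      rw [hfe, Nat.card_Ioo, if_neg haq]
      omega
  rw [key, Finset.sum_congr rfl (fun a ha => inner a (Finset.mem_range.mp ha))]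
  -- split the sum
  rw [show p + q = q + p from add_comm p q, Finset.sum_range_add]
  have e2 : ∑ i ∈ Finset.range q, (if i < q then min (p-1) i else (p-1) - (i-q)) =
      ∑ i ∈ Finset.range q, min (p-1) i := by
    apply Finset.sum_congr rfl
    intro i hi
    rw [if_pos (Finset.mem_range.mp hi)]
  have e3 : ∑ i ∈ Finset.range p, (if q + i < q then min (p-1) (q+i) else (p-1) - (q+i-q)) =
      ∑ i ∈ Finset.range p, ((p-1) - i) := by
    apply Finset.sum_congr rfl
    intro i _
    rw [if_neg (by omega)]
    congr 1
    omega
  rw [e2, e3]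
  have e4 : ∑ i ∈ Finset.range p, ((p-1) - i) = ∑ i ∈ Finset.range p, i := by
    have := Finset.sum_range_reflect id p
    simpa using this
  rw [e4]
  have hqsplit : q = (p-1) + (q - p + 1) := by omega
  have e5 : ∑ i ∈ Finset.range q, min (p-1) i =
      (∑ i ∈ Finset.range (p-1), i) + (q - p + 1) * (p-1) := by
    conv_lhs => rw [hqsplit]
    rw [Finset.sum_range_add]
    congr 1
    · apply Finset.sum_congr rfl
      intro i hi
      have := Finset.mem_range.mp hi
      omega
    · rw [Finset.sum_congr rfl (fun i _ => (by omega : min (p-1) ((p-1) + i) = p - 1))]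
      rw [Finset.sum_const, Finset.card_range, smul_eq_mul]
  rw [e5]
  have hs : (∑ i ∈ Finset.range (p-1), i) * 2 = (p-1) * (p-1-1) := Finset.sum_range_id_mul_two (p-1)
  have hs2 : (∑ i ∈ Finset.range p, i) * 2 = p * (p-1) := Finset.sum_range_id_mul_two p
  set s := ∑ i ∈ Finset.range (p-1), i
  set s2 := ∑ i ∈ Finset.range p, i
  rcases Nat.eq_or_lt_of_le hp with h1 | h2
  · -- p = 1
    have hp1 : p = 1 := h1.symm
    subst hp1
    simp at hs hs2 ⊢
    omega
  · -- p ≥ 2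
    apply Nat.eq_of_mul_eq_mul_right (show 0 < 2 by norm_num)
    zify [show 1 ≤ p by omega, show 2 ≤ p by omega, show 1 ≤ p - 1 by omega, show p ≤ q by omega] at hs hs2 ⊢
    ring_nf
    ring_nf at hs hs2
    nlinarith [hs, hs2]
end

section
/- Let G be a toroidal grid diagram of size n given by permutations σ_X, σ_O of ℤ/n with σ_X(i) ≠ σ_O(i) for all i. Define the fully blocked grid differential over 𝔽₂ on the vector space spanned by grid states by ∂̃(x) = Σ_y #{r ∈ Rect°(x,y) : r ∩ 𝕏 = ∅ and r ∩ 𝕆 = ∅} · y (mod 2), where Rect°(x,y) is the set of empty rectangles from x to y (rectangles whose interior contains no component of x or y). Then ∂̃ ∘ ∂̃ = 0. -/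
instance {n : ℕ} [NeZero n] (i j c : ZMod n) : Decidable (cycMem i j c) := by
  unfold cycMem; infer_instance

/-- The number of empty rectangles from grid state `x` to grid state `y` on the
toroidal grid, disjoint from all X- and O-markings.  A rectangle is encoded by
its corner data `(i, j, a, b)`: its SW and NE corners `(i,a)`, `(j,b)` are
components of `x`, its other corners `(i,b)`, `(j,a)` are components of `y`,
and `x, y` agree in all other columns; it is empty if its interior contains no
component of `x`, and it must contain none of the cells `(c, σ_X(c))`,
`(c, σ_O(c))` carrying markings. -/
def emptyRectCount {n : ℕ} [NeZero n] (σX σO : Equiv.Perm (ZMod n))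
    (x y : Equiv.Perm (ZMod n)) : ℕ :=
  ((Finset.univ : Finset (ZMod n × ZMod n × ZMod n × ZMod n)).filter
    (fun q =>
      q.1 ≠ q.2.1 ∧ q.2.2.1 ≠ q.2.2.2 ∧
      x q.1 = q.2.2.1 ∧ x q.2.1 = q.2.2.2 ∧
      y q.1 = q.2.2.2 ∧ y q.2.1 = q.2.2.1 ∧
      (∀ k, k ≠ q.1 → k ≠ q.2.1 → x k = y k) ∧
      -- the interior contains no component of x
      (∀ k, ¬((cycMem q.1 q.2.1 k ∧ k ≠ q.1) ∧
              (cycMem q.2.2.1 q.2.2.2 (x k) ∧ x k ≠ q.2.2.1))) ∧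
      -- the rectangle contains no X-marking and no O-marking
      (∀ c, ¬(cycMem q.1 q.2.1 c ∧ cycMem q.2.2.1 q.2.2.2 (σX c))) ∧
      (∀ c, ¬(cycMem q.1 q.2.1 c ∧ cycMem q.2.2.1 q.2.2.2 (σO c))))).card

set_option linter.unusedSectionVars false
namespace Grid13

variable {n : ℕ} [NeZero n]

/-- cyclic distance from `i` to `j` -/
def dz (i j : ZMod n) : ℕ := (j - i).val

lemma dz_lt (i j : ZMod n) : dz i j < n := ZMod.val_lt _

lemma dz_self (i : ZMod n) : dz i i = 0 := by simp [dz]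

lemma dz_eq_zero {i j : ZMod n} : dz i j = 0 ↔ i = j := by
  unfold dz
  rw [ZMod.val_eq_zero, sub_eq_zero, eq_comm]

lemma dz_injr {w u v : ZMod n} (h : dz w u = dz w v) : u = v := by
  have h2 : u - w = v - w := ZMod.val_injective _ h
  exact by linear_combination h2

lemma dz_ne {w u v : ZMod n} (h : u ≠ v) : dz w u ≠ dz w v :=
  fun hh => h (dz_injr hh)

lemma dz_pos {u v : ZMod n} (h : u ≠ v) : dz u v ≠ 0 :=
  fun hh => h (dz_eq_zero.mp hh)

lemma dz_add (i j k : ZMod n) :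
    dz i j + dz j k = dz i k ∨ dz i j + dz j k = dz i k + n := by
  have h : dz i k = (dz j k + dz i j) % n := by
    unfold dz
    rw [← ZMod.val_add]
    congr 1
    ring
  rcases Nat.lt_or_ge (dz j k + dz i j) n with h' | h'
  · rw [Nat.mod_eq_of_lt h'] at h; omega
  · have h2 : dz j k + dz i j - n < n := by
      have := dz_lt i j; have := dz_lt j k; omega
    rw [Nat.mod_eq_sub_mod h', Nat.mod_eq_of_lt h2] at h
    have := dz_lt i j; have := dz_lt j k; omega

lemma dz_pred {u v : ZMod n} (h : u ≠ v) : dz u (v - 1) = dz u v - 1 := by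
  unfold dz
  have h0 : (v - u) ≠ 0 := sub_ne_zero.mpr (Ne.symm h)
  have he : v - 1 - u = (v - u) - 1 := by ring
  rw [he]
  generalize v - u = w at *
  have hv : w.val ≠ 0 := fun e => h0 (by
    have := ZMod.natCast_zmod_val w
    rw [e] at this; simpa using this.symm)
  have h1 : ((w.val - 1 : ℕ) : ZMod n) = w - 1 := by
    rw [Nat.cast_sub (Nat.one_le_iff_ne_zero.mpr hv), ZMod.natCast_zmod_val]
    simp
  rw [← h1, ZMod.val_natCast, Nat.mod_eq_of_lt]
  have := ZMod.val_lt w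
  omega

lemma cycMem_iff {i j c : ZMod n} : cycMem i j c ↔ dz i c < dz i j := Iff.rfl




structure RP (σX σO x y : Equiv.Perm (ZMod n)) (i j a b : ZMod n) : Prop where
  hij : i ≠ j
  hab : a ≠ b
  hxi : x i = a
  hxj : x j = b
  hyi : y i = b
  hyj : y j = a
  agree : ∀ k, k ≠ i → k ≠ j → x k = y k
  empty : ∀ k, ¬((cycMem i j k ∧ k ≠ i) ∧ (cycMem a b (x k) ∧ x k ≠ a))
  mX : ∀ c, ¬(cycMem i j c ∧ cycMem a b (σX c))
  mO : ∀ c, ¬(cycMem i j c ∧ cycMem a b (σO c))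

lemma RP.y_eq {σX σO x y : Equiv.Perm (ZMod n)} {i j a b : ZMod n}
    (h : RP σX σO x y i j a b) : y = Equiv.swap a b * x := by
  ext k
  rcases eq_or_ne k i with rfl | hki
  · simp [h.hyi, h.hxi, Equiv.swap_apply_left]
  rcases eq_or_ne k j with rfl | hkj
  · simp [h.hyj, h.hxj]
  · have h1 : x k ≠ a := fun hh => hki (x.injective (by rw [hh, h.hxi]))
    have h2 : x k ≠ b := fun hh => hkj (x.injective (by rw [hh, h.hxj]))
    simp [← h.agree k hki hkj, Equiv.swap_apply_of_ne_of_ne h1 h2]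

abbrev Q4 (n : ℕ) := ZMod n × ZMod n × ZMod n × ZMod n

def ruleF (i j a b i2 j2 a2 b2 : ZMod n) : Q4 n × Q4 n :=
  if i2 = j then
    if dz a b < dz a b2 then ((j,j2,b,b2),(i,j2,a,b)) else ((i,j2,a,b2),(i,j,b2,b))
  else if j2 = j then
    if dz i2 i < dz i2 j then ((i2,i,a2,a),(i,j,a2,b)) else ((i2,j,a2,b),(i,i2,a,b))
  else if i2 = i then
    if dz i j2 < dz i j then ((i,j2,a,b2),(j2,j,a,b)) else ((j,j2,b,b2),(i,j,a,b2))
  else if j2 = i then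
    if dz a a2 < dz a b then ((i2,j,a2,b),(i,j,a,a2)) else ((i2,i,a2,a),(i2,j,a,b))
  else ((i2,j2,a2,b2),(i,j,a,b))

lemma RP.empty' {σX σO x y : Equiv.Perm (ZMod n)} {i j a b : ZMod n}
    (h : RP σX σO x y i j a b) (k : ZMod n) :
    ¬((dz i k < dz i j ∧ dz i k ≠ 0) ∧ (dz a (x k) < dz a b ∧ dz a (x k) ≠ 0)) := by
  rintro ⟨⟨p1, p2⟩, p3, p4⟩
  exact h.empty k ⟨⟨p1, fun e => p2 (by rw [e, dz_self])⟩,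
    ⟨p3, fun e => p4 (by rw [e, dz_self])⟩⟩

lemma RP.mX' {σX σO x y : Equiv.Perm (ZMod n)} {i j a b : ZMod n}
    (h : RP σX σO x y i j a b) (c : ZMod n) :
    ¬(dz i c < dz i j ∧ dz a (σX c) < dz a b) := h.mX c

lemma RP.mO' {σX σO x y : Equiv.Perm (ZMod n)} {i j a b : ZMod n}
    (h : RP σX σO x y i j a b) (c : ZMod n) :
    ¬(dz i c < dz i j ∧ dz a (σO c) < dz a b) := h.mO c

lemma RP.of_dz {σX σO x y : Equiv.Perm (ZMod n)} {i j a b : ZMod n}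
    (hij : i ≠ j) (hab : a ≠ b) (hxi : x i = a) (hxj : x j = b)
    (hyi : y i = b) (hyj : y j = a)
    (agree : ∀ k, k ≠ i → k ≠ j → x k = y k)
    (empty : ∀ k, ¬((dz i k < dz i j ∧ dz i k ≠ 0) ∧
        (dz a (x k) < dz a b ∧ dz a (x k) ≠ 0)))
    (mX : ∀ c, ¬(dz i c < dz i j ∧ dz a (σX c) < dz a b))
    (mO : ∀ c, ¬(dz i c < dz i j ∧ dz a (σO c) < dz a b)) :
    RP σX σO x y i j a b := by
  refine ⟨hij, hab, hxi, hxj, hyi, hyj, agree, ?_, mX, mO⟩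
  rintro k ⟨⟨c1, c2⟩, c3, c4⟩
  exact empty k ⟨⟨c1, fun e => c2 (dz_eq_zero.mp e).symm⟩,
    ⟨c3, fun e => c4 (dz_eq_zero.mp e).symm⟩⟩

lemma swap_eval {x : Equiv.Perm (ZMod n)} {p q k : ZMod n} :
    (Equiv.swap p q * x) k = Equiv.swap p q (x k) := rfl

lemma xk_ne {x : Equiv.Perm (ZMod n)} {k i a : ZMod n} (hxi : x i = a)
    (hki : k ≠ i) : x k ≠ a := fun hh => hki (x.injective (by rw [hh, hxi]))
theorem step (σX σO x y z : Equiv.Perm (ZMod n)) (hXO : ∀ i, σX i ≠ σO i)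
    {i j a b i2 j2 a2 b2 : ZMod n}
    (h1 : RP σX σO x y i j a b) (h2 : RP σX σO y z i2 j2 a2 b2) :
    RP σX σO x (Equiv.swap (ruleF i j a b i2 j2 a2 b2).1.2.2.1
        (ruleF i j a b i2 j2 a2 b2).1.2.2.2 * x)
      (ruleF i j a b i2 j2 a2 b2).1.1 (ruleF i j a b i2 j2 a2 b2).1.2.1
      (ruleF i j a b i2 j2 a2 b2).1.2.2.1 (ruleF i j a b i2 j2 a2 b2).1.2.2.2 ∧
    RP σX σO (Equiv.swap (ruleF i j a b i2 j2 a2 b2).1.2.2.1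
        (ruleF i j a b i2 j2 a2 b2).1.2.2.2 * x) z
      (ruleF i j a b i2 j2 a2 b2).2.1 (ruleF i j a b i2 j2 a2 b2).2.2.1
      (ruleF i j a b i2 j2 a2 b2).2.2.2.1 (ruleF i j a b i2 j2 a2 b2).2.2.2.2 ∧
    (ruleF (ruleF i j a b i2 j2 a2 b2).1.1 (ruleF i j a b i2 j2 a2 b2).1.2.1
        (ruleF i j a b i2 j2 a2 b2).1.2.2.1 (ruleF i j a b i2 j2 a2 b2).1.2.2.2
        (ruleF i j a b i2 j2 a2 b2).2.1 (ruleF i j a b i2 j2 a2 b2).2.2.1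
        (ruleF i j a b i2 j2 a2 b2).2.2.2.1 (ruleF i j a b i2 j2 a2 b2).2.2.2.2)
      = ((i,j,a,b),(i2,j2,a2,b2)) ∧
    (ruleF i j a b i2 j2 a2 b2).1 ≠ (i,j,a,b) := by
  have hij := h1.hij
  have hab := h1.hab
  by_cases hc1 : i2 = j
  · rw [hc1] at h2 ⊢
    have ha2 : a2 = a := by rw [← h2.hxi, h1.hyj]
    rw [ha2] at h2 ⊢
    have hjj2 : j ≠ j2 := h2.hij
    have hab2 : a ≠ b2 := h2.hab
    -- exclude the annulus case j2 = i
    have hj2i : j2 ≠ i := by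
      intro he
      rw [he] at h2
      have hb2 : b2 = b := by rw [← h2.hxj, h1.hyi]
      rw [hb2] at h2
      have hs : σX (σX.symm a) = a := Equiv.apply_symm_apply _ _
      have hm1 := h1.mX' (σX.symm a)
      have hm2 := h2.mX' (σX.symm a)
      rw [hs] at hm1 hm2
      simp only [dz_self] at hm1 hm2
      have h5 := dz_add i j (σX.symm a)
      have h6 := dz_add i j i
      rw [dz_self] at h6
      have h7 := Nat.pos_of_ne_zero (dz_pos hij)
      have h8 := Nat.pos_of_ne_zero (dz_pos (Ne.symm hij))
      have h9 := dz_lt i (σX.symm a)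
      have h10 := dz_lt j (σX.symm a)
      have hp := Nat.pos_of_ne_zero (dz_pos hab)
      omega
    have hxj2 : x j2 = b2 := (h1.agree j2 hj2i (Ne.symm hjj2)).trans h2.hxj
    have hbb2 : b ≠ b2 := by
      rw [← h1.hxj, ← hxj2]; exact fun hh => hjj2 (x.injective hh)
    have hsum : dz i j + dz j j2 = dz i j2 := by
      rcases dz_add i j j2 with h5 | h5
      · exact h5
      · exfalso
        have hs : σX (σX.symm a) = a := Equiv.apply_symm_apply _ _
        have hm1 := h1.mX' (σX.symm a)
        have hm2 := h2.mX' (σX.symm a)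
        rw [hs] at hm1 hm2
        simp only [dz_self] at hm1 hm2
        have h6 := dz_add i j (σX.symm a)
        have h9 := dz_lt i (σX.symm a)
        have h10 := dz_lt j (σX.symm a)
        have h11 := dz_lt i j2
        have hp := Nat.pos_of_ne_zero (dz_pos hab)
        have hp2 := Nat.pos_of_ne_zero (dz_pos hab2)
        omega
    have hpjj2 := Nat.pos_of_ne_zero (dz_pos hjj2)
    have hpij := Nat.pos_of_ne_zero (dz_pos hij)
    have hpab := Nat.pos_of_ne_zero (dz_pos hab)
    have hpab2 := Nat.pos_of_ne_zero (dz_pos hab2)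
    have hdisc : dz i j < dz i j2 := by omega
    have hrow := dz_add a b b2
    have hlab2 := dz_lt a b2
    have hlab := dz_lt a b
    by_cases hd : dz a b < dz a b2
    · -- branch 1A : r1' = (j,j2,b,b2), r2' = (i,j2,a,b)
      have hr : ruleF i j a b j j2 a b2 = ((j,j2,b,b2),(i,j2,a,b)) := by
        rw [ruleF, if_pos rfl, if_pos hd]
      have hrow' : dz a b + dz b b2 = dz a b2 := by
        have := dz_lt b b2; omega
      have hG1 : RP σX σO x (Equiv.swap b b2 * x) j j2 b b2 := by
        refine RP.of_dz hjj2 hbb2 h1.hxj hxj2 ?_ ?_ ?_ ?_ ?_ ?_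
        · rw [swap_eval, h1.hxj, Equiv.swap_apply_left]
        · rw [swap_eval, hxj2, Equiv.swap_apply_right]
        · intro k hkj hkj2
          rw [swap_eval,
            Equiv.swap_apply_of_ne_of_ne (xk_ne h1.hxj hkj) (xk_ne hxj2 hkj2)]
        · rintro k ⟨⟨e1, e2⟩, e3, e4⟩
          have hkj : k ≠ j := fun e => e2 (by rw [e, dz_self])
          by_cases hki : k = i
          · subst hki
            rw [h1.hxi] at e3 e4
            have r1 := dz_add a b a
            rw [dz_self] at r1
            omega
          by_cases hkj2 : k = j2
          · subst hkj2; omega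
          · have hE := h2.empty' k
            rw [← h1.agree k hki hkj] at hE
            have r2 := dz_add a b (x k)
            have l1 := dz_lt a (x k)
            have l2 := dz_lt b (x k)
            omega
        · rintro c ⟨m1, m2⟩
          have hm := h2.mX' c
          have r3 := dz_add a b (σX c)
          have l1 := dz_lt a (σX c)
          exact hm ⟨m1, by omega⟩
        · rintro c ⟨m1, m2⟩
          have hm := h2.mO' c
          have r3 := dz_add a b (σO c)
          have l1 := dz_lt a (σO c)
          exact hm ⟨m1, by omega⟩
      have hG2 : RP σX σO (Equiv.swap b b2 * x) z i j2 a b := by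
        refine RP.of_dz (Ne.symm hj2i) hab ?_ ?_ ?_ h2.hyj ?_ ?_ ?_ ?_
        · rw [swap_eval, h1.hxi, Equiv.swap_apply_of_ne_of_ne hab hab2]
        · rw [swap_eval, hxj2, Equiv.swap_apply_right]
        · rw [← h2.agree i hij (Ne.symm hj2i)]; exact h1.hyi
        · intro k hki hkj2
          by_cases hkj : k = j
          · subst hkj
            rw [swap_eval, h1.hxj, Equiv.swap_apply_left, h2.hyi]
          · rw [swap_eval,
              Equiv.swap_apply_of_ne_of_ne (xk_ne h1.hxj hkj) (xk_ne hxj2 hkj2),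
              h1.agree k hki hkj, h2.agree k hkj hkj2]
        · rintro k ⟨⟨e1, e2⟩, e3, e4⟩
          have hki : k ≠ i := fun e => e2 (by rw [e, dz_self])
          by_cases hkj : k = j
          · subst hkj
            rw [swap_eval, h1.hxj, Equiv.swap_apply_left] at e3 e4
            omega
          by_cases hkj2 : k = j2
          · subst hkj2; omega
          · rw [swap_eval,
              Equiv.swap_apply_of_ne_of_ne (xk_ne h1.hxj hkj) (xk_ne hxj2 hkj2)]
              at e3 e4
            have hE1 := h1.empty' k
            have hE2 := h2.empty' k
            rw [← h1.agree k hki hkj] at hE2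
            have r1 := dz_add i j k
            have l1 := dz_lt i k
            have l2 := dz_lt j k
            have l3 := dz_pos (Ne.symm hkj)
            omega
        · rintro c ⟨m1, m2⟩
          have q1 := h1.mX' c
          have q2 := h2.mX' c
          have r := dz_add i j c
          have l1 := dz_lt i c
          have l2 := dz_lt j c
          omega
        · rintro c ⟨m1, m2⟩
          have q1 := h1.mO' c
          have q2 := h2.mO' c
          have r := dz_add i j c
          have l1 := dz_lt i c
          have l2 := dz_lt j c
          omega
      have hG3 : ruleF j j2 b b2 i j2 a b = ((i,j,a,b),(j,j2,a,b2)) := by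
        rw [ruleF, if_neg (Ne.symm hj2i), if_pos rfl, if_pos hdisc]
      simp only [hr]
      exact ⟨hG1, hG2, hG3, fun hcon => hij (congrArg Prod.fst hcon).symm⟩
    · -- branch 1B : r1' = (i,j2,a,b2), r2' = (i,j,b2,b)
      have hne := dz_ne (w := a) hbb2
      have hd' : dz a b2 < dz a b := by omega
      have hr : ruleF i j a b j j2 a b2 = ((i,j2,a,b2),(i,j,b2,b)) := by
        rw [ruleF, if_pos rfl, if_neg hd]
      have hrow' : dz a b2 + dz b2 b = dz a b := by
        have r := dz_add a b2 b; have := dz_lt b2 b; omega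
      have hG1 : RP σX σO x (Equiv.swap a b2 * x) i j2 a b2 := by
        refine RP.of_dz (Ne.symm hj2i) hab2 h1.hxi hxj2 ?_ ?_ ?_ ?_ ?_ ?_
        · rw [swap_eval, h1.hxi, Equiv.swap_apply_left]
        · rw [swap_eval, hxj2, Equiv.swap_apply_right]
        · intro k hki hkj2
          rw [swap_eval,
            Equiv.swap_apply_of_ne_of_ne (xk_ne h1.hxi hki) (xk_ne hxj2 hkj2)]
        · rintro k ⟨⟨e1, e2⟩, e3, e4⟩
          have hki : k ≠ i := fun e => e2 (by rw [e, dz_self])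
          by_cases hkj : k = j
          · subst hkj
            rw [h1.hxj] at e3 e4
            omega
          by_cases hkj2 : k = j2
          · subst hkj2; omega
          · have hE1 := h1.empty' k
            have hE2 := h2.empty' k
            rw [← h1.agree k hki hkj] at hE2
            have r1 := dz_add i j k
            have l1 := dz_lt i k
            have l2 := dz_lt j k
            have l3 := dz_pos (Ne.symm hkj)
            omega
        · rintro c ⟨m1, m2⟩
          have q1 := h1.mX' c
          have q2 := h2.mX' c
          have r := dz_add i j c
          have l1 := dz_lt i c
          have l2 := dz_lt j c
          omega
        · rintro c ⟨m1, m2⟩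
          have q1 := h1.mO' c
          have q2 := h2.mO' c
          have r := dz_add i j c
          have l1 := dz_lt i c
          have l2 := dz_lt j c
          omega
      have hG2 : RP σX σO (Equiv.swap a b2 * x) z i j b2 b := by
        refine RP.of_dz hij (Ne.symm hbb2) ?_ ?_ ?_ ?_ ?_ ?_ ?_ ?_
        · rw [swap_eval, h1.hxi, Equiv.swap_apply_left]
        · rw [swap_eval, h1.hxj,
            Equiv.swap_apply_of_ne_of_ne (Ne.symm hab) hbb2]
        · rw [← h2.agree i hij (Ne.symm hj2i)]; exact h1.hyi
        · exact h2.hyi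
        · intro k hki hkj
          by_cases hkj2 : k = j2
          · subst hkj2
            rw [swap_eval, hxj2, Equiv.swap_apply_right, h2.hyj]
          · rw [swap_eval,
              Equiv.swap_apply_of_ne_of_ne (xk_ne h1.hxi hki) (xk_ne hxj2 hkj2),
              h1.agree k hki hkj, h2.agree k hkj hkj2]
        · rintro k ⟨⟨e1, e2⟩, e3, e4⟩
          have hki : k ≠ i := fun e => e2 (by rw [e, dz_self])
          by_cases hkj : k = j
          · subst hkj; omega
          by_cases hkj2 : k = j2
          · subst hkj2
            rw [swap_eval, hxj2, Equiv.swap_apply_right] at e3 e4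
            have r2 := dz_add a b2 a
            rw [dz_self] at r2
            omega
          · rw [swap_eval,
              Equiv.swap_apply_of_ne_of_ne (xk_ne h1.hxi hki) (xk_ne hxj2 hkj2)]
              at e3 e4
            have hE1 := h1.empty' k
            have r := dz_add a b2 (x k)
            have l1 := dz_lt a (x k)
            have l2 := dz_lt b2 (x k)
            omega
        · rintro c ⟨m1, m2⟩
          have q1 := h1.mX' c
          have r := dz_add a b2 (σX c)
          have l1 := dz_lt a (σX c)
          omega
        · rintro c ⟨m1, m2⟩
          have q1 := h1.mO' c
          have r := dz_add a b2 (σO c)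
          have l1 := dz_lt a (σO c)
          omega
      have hG3 : ruleF i j2 a b2 i j b2 b = ((i,j,a,b),(j,j2,a,b2)) := by
        rw [ruleF, if_neg (Ne.symm hj2i), if_neg hjj2, if_pos rfl, if_pos hdisc]
      simp only [hr]
      exact ⟨hG1, hG2, hG3,
        fun hcon => hjj2 (congrArg (fun t : Q4 n => t.2.1) hcon).symm⟩
  by_cases hc2 : j2 = j
  · rw [hc2] at h2 ⊢
    have hb2 : b2 = a := by rw [← h2.hxj, h1.hyj]
    rw [hb2] at h2 ⊢
    have hi2j : i2 ≠ j := h2.hij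
    have ha2a : a2 ≠ a := h2.hab
    -- exclude the annulus case i2 = i
    have hi2i : i2 ≠ i := by
      intro he
      rw [he] at h2
      have ha2 : a2 = b := by rw [← h2.hxi, h1.hyi]
      rw [ha2] at h2
      have hm1 := h1.mX' i
      have hm2 := h2.mX' i
      simp only [dz_self] at hm1 hm2
      have r := dz_add a b (σX i)
      have r2 := dz_add a b a
      rw [dz_self] at r2
      have l1 := dz_lt a (σX i)
      have l2 := dz_lt b (σX i)
      have hp1 := Nat.pos_of_ne_zero (dz_pos hij)
      have hp2 := Nat.pos_of_ne_zero (dz_pos hab)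
      have hp3 := Nat.pos_of_ne_zero (dz_pos (Ne.symm hab))
      omega
    have hxi2 : x i2 = a2 := (h1.agree i2 hi2i hi2j).trans h2.hxi
    have ha2b : a2 ≠ b := by
      rw [← hxi2, ← h1.hxj]; exact fun hh => hi2j (x.injective hh)
    have hpij := Nat.pos_of_ne_zero (dz_pos hij)
    have hpi2j := Nat.pos_of_ne_zero (dz_pos hi2j)
    have hpab := Nat.pos_of_ne_zero (dz_pos hab)
    have hpa2a := Nat.pos_of_ne_zero (dz_pos ha2a)
    have hpa2b := Nat.pos_of_ne_zero (dz_pos ha2b)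
    have hrsum : dz a2 a + dz a b = dz a2 b := by
      rcases dz_add a2 a b with h5 | h5
      · exact h5
      · exfalso
        have hm1i := h1.mX' i
        have hm2i := h2.mX' i
        have hm1i2 := h1.mX' i2
        have hm2i2 := h2.mX' i2
        simp only [dz_self] at hm1i hm2i hm1i2 hm2i2
        have r1 := dz_add i2 i j
        have r2 := dz_add i i2 j
        have r3 := dz_add a2 a (σX i)
        have r4 := dz_add a2 a (σX i2)
        have l1 := dz_lt a (σX i)
        have l2 := dz_lt a2 (σX i)
        have l3 := dz_lt a (σX i2)
        have l4 := dz_lt a2 (σX i2)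
        have l5 := dz_lt i2 j
        have l6 := dz_lt i j
        have l7 := dz_lt a2 b
        have rr1 := dz_add i i2 i
        simp only [dz_self] at rr1
        have l8 := dz_lt i i2
        have l9 := dz_lt i2 i
        have l10 := Nat.pos_of_ne_zero (dz_pos (Ne.symm hi2i))
        omega
    by_cases hd : dz i2 i < dz i2 j
    · -- branch 2A : r1' = (i2,i,a2,a), r2' = (i,j,a2,b)
      have hr : ruleF i j a b i2 j a2 a = ((i2,i,a2,a),(i,j,a2,b)) := by
        rw [ruleF, if_neg hi2j, if_pos rfl, if_pos hd]
      have hcsum : dz i2 i + dz i j = dz i2 j := by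
        have r := dz_add i2 i j; have := dz_lt i j; omega
      have hG1 : RP σX σO x (Equiv.swap a2 a * x) i2 i a2 a := by
        refine RP.of_dz hi2i ha2a hxi2 h1.hxi ?_ ?_ ?_ ?_ ?_ ?_
        · rw [swap_eval, hxi2, Equiv.swap_apply_left]
        · rw [swap_eval, h1.hxi, Equiv.swap_apply_right]
        · intro k hki2 hki
          rw [swap_eval,
            Equiv.swap_apply_of_ne_of_ne (xk_ne hxi2 hki2) (xk_ne h1.hxi hki)]
        · rintro k ⟨⟨e1, e2⟩, e3, e4⟩
          have hki2 : k ≠ i2 := fun e => e2 (by rw [e, dz_self])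
          by_cases hkj : k = j
          · rw [hkj] at e3 e4
            rw [h1.hxj] at e3 e4
            omega
          by_cases hki : k = i
          · rw [hki] at e1; omega
          · have hE2 := h2.empty' k
            rw [← h1.agree k hki hkj] at hE2
            omega
        · rintro c ⟨m1, m2⟩
          exact h2.mX' c ⟨by omega, m2⟩
        · rintro c ⟨m1, m2⟩
          exact h2.mO' c ⟨by omega, m2⟩
      have hG2 : RP σX σO (Equiv.swap a2 a * x) z i j a2 b := by
        refine RP.of_dz hij ha2b ?_ ?_ ?_ h2.hyj ?_ ?_ ?_ ?_
        · rw [swap_eval, h1.hxi, Equiv.swap_apply_right]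
        · rw [swap_eval, h1.hxj,
            Equiv.swap_apply_of_ne_of_ne (Ne.symm ha2b) (Ne.symm hab)]
        · rw [← h2.agree i (Ne.symm hi2i) hij]; exact h1.hyi
        · intro k hki hkj
          by_cases hki2 : k = i2
          · subst hki2
            rw [swap_eval, hxi2, Equiv.swap_apply_left, h2.hyi]
          · rw [swap_eval,
              Equiv.swap_apply_of_ne_of_ne (xk_ne hxi2 hki2) (xk_ne h1.hxi hki),
              h1.agree k hki hkj, h2.agree k hki2 hkj]
        · rintro k ⟨⟨e1, e2⟩, e3, e4⟩
          have hki : k ≠ i := fun e => e2 (by rw [e, dz_self])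
          by_cases hki2 : k = i2
          · rw [hki2] at e1
            have rr := dz_add i i2 i
            simp only [dz_self] at rr
            have := dz_lt i2 j
            have := dz_lt i i2
            have := Nat.pos_of_ne_zero (dz_pos (Ne.symm hi2i))
            have := Nat.pos_of_ne_zero (dz_pos hi2i)
            omega
          by_cases hkj : k = j
          · rw [hkj] at e1; omega
          · rw [swap_eval,
              Equiv.swap_apply_of_ne_of_ne (xk_ne hxi2 hki2) (xk_ne h1.hxi hki)]
              at e3 e4
            have hE1 := h1.empty' k
            have hE2 := h2.empty' k
            rw [← h1.agree k hki hkj] at hE2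
            have r1 := dz_add i2 i k
            have r2 := dz_add a2 a (x k)
            have l1 := dz_lt i2 k
            have l2 := dz_lt i k
            have l3 := dz_lt a2 (x k)
            have l4 := dz_lt a (x k)
            have l5 := dz_pos (Ne.symm hki2)
            have hnea := dz_ne (w := a2) (xk_ne h1.hxi hki)
            omega
        · rintro c ⟨m1, m2⟩
          have q1 := h1.mX' c
          have q2 := h2.mX' c
          have r1 := dz_add i2 i c
          have r2 := dz_add a2 a (σX c)
          have l1 := dz_lt i2 c
          have l2 := dz_lt a2 (σX c)
          have l3 := dz_lt a (σX c)
          omega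
        · rintro c ⟨m1, m2⟩
          have q1 := h1.mO' c
          have q2 := h2.mO' c
          have r1 := dz_add i2 i c
          have r2 := dz_add a2 a (σO c)
          have l1 := dz_lt i2 c
          have l2 := dz_lt a2 (σO c)
          have l3 := dz_lt a (σO c)
          omega
      have hG3 : ruleF i2 i a2 a i j a2 b = ((i,j,a,b),(i2,j,a2,a)) := by
        rw [ruleF, if_pos rfl, if_pos (show dz a2 a < dz a2 b by omega)]
      simp only [hr]
      exact ⟨hG1, hG2, hG3, fun hcon => hi2i (congrArg Prod.fst hcon)⟩
    · -- branch 2B : r1' = (i2,j,a2,b), r2' = (i,i2,a,b)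
      have hr : ruleF i j a b i2 j a2 a = ((i2,j,a2,b),(i,i2,a,b)) := by
        rw [ruleF, if_neg hi2j, if_pos rfl, if_neg hd]
      have hcsum : dz i i2 + dz i2 j = dz i j ∧ 0 < dz i i2 := by
        have r := dz_add i2 i j
        have rr := dz_add i i2 i
        rw [dz_self] at rr
        have r2 := dz_add i i2 j
        have l1 := dz_lt i j
        have l2 := dz_lt i2 j
        have l3 := dz_lt i i2
        have l4 := Nat.pos_of_ne_zero (dz_pos (Ne.symm hi2i))
        have l5 := Nat.pos_of_ne_zero (dz_pos hi2i)
        omega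
      obtain ⟨hcsum, hpii2⟩ := hcsum
      have hG1 : RP σX σO x (Equiv.swap a2 b * x) i2 j a2 b := by
        refine RP.of_dz hi2j ha2b hxi2 h1.hxj ?_ ?_ ?_ ?_ ?_ ?_
        · rw [swap_eval, hxi2, Equiv.swap_apply_left]
        · rw [swap_eval, h1.hxj, Equiv.swap_apply_right]
        · intro k hki2 hkj
          rw [swap_eval,
            Equiv.swap_apply_of_ne_of_ne (xk_ne hxi2 hki2) (xk_ne h1.hxj hkj)]
        · rintro k ⟨⟨e1, e2⟩, e3, e4⟩
          have hki2 : k ≠ i2 := fun e => e2 (by rw [e, dz_self])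
          by_cases hki : k = i
          · rw [hki] at e1; omega
          by_cases hkj : k = j
          · rw [hkj] at e1; omega
          · have hE1 := h1.empty' k
            have hE2 := h2.empty' k
            rw [← h1.agree k hki hkj] at hE2
            have r1 := dz_add i i2 k
            have r2 := dz_add a2 a (x k)
            have l1 := dz_lt i k
            have l2 := dz_lt i2 k
            have l3 := dz_lt a2 (x k)
            have l4 := dz_lt a (x k)
            have l5 := dz_pos (Ne.symm hki)
            have hnea := dz_ne (w := a2) (xk_ne h1.hxi hki)
            omega
        · rintro c ⟨m1, m2⟩
          have q1 := h1.mX' c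
          have q2 := h2.mX' c
          have r1 := dz_add i i2 c
          have r2 := dz_add a2 a (σX c)
          have l1 := dz_lt i c
          have l2 := dz_lt a2 (σX c)
          have l3 := dz_lt a (σX c)
          omega
        · rintro c ⟨m1, m2⟩
          have q1 := h1.mO' c
          have q2 := h2.mO' c
          have r1 := dz_add i i2 c
          have r2 := dz_add a2 a (σO c)
          have l1 := dz_lt i c
          have l2 := dz_lt a2 (σO c)
          have l3 := dz_lt a (σO c)
          omega
      have hG2 : RP σX σO (Equiv.swap a2 b * x) z i i2 a b := by
        refine RP.of_dz (Ne.symm hi2i) hab ?_ ?_ ?_ ?_ ?_ ?_ ?_ ?_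
        · rw [swap_eval, h1.hxi,
            Equiv.swap_apply_of_ne_of_ne (Ne.symm ha2a) hab]
        · rw [swap_eval, hxi2, Equiv.swap_apply_left]
        · rw [← h2.agree i (Ne.symm hi2i) hij]; exact h1.hyi
        · exact h2.hyi
        · intro k hki hki2
          by_cases hkj : k = j
          · subst hkj
            rw [swap_eval, h1.hxj, Equiv.swap_apply_right, h2.hyj]
          · rw [swap_eval,
              Equiv.swap_apply_of_ne_of_ne (xk_ne hxi2 hki2) (xk_ne h1.hxj hkj),
              h1.agree k hki hkj, h2.agree k hki2 hkj]
        · rintro k ⟨⟨e1, e2⟩, e3, e4⟩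
          have hki : k ≠ i := fun e => e2 (by rw [e, dz_self])
          by_cases hki2 : k = i2
          · rw [hki2] at e1; omega
          by_cases hkj : k = j
          · rw [hkj] at e1
            have := dz_lt i2 j
            omega
          · rw [swap_eval,
              Equiv.swap_apply_of_ne_of_ne (xk_ne hxi2 hki2) (xk_ne h1.hxj hkj)]
              at e3 e4
            have hE1 := h1.empty' k
            omega
        · rintro c ⟨m1, m2⟩
          exact h1.mX' c ⟨by omega, m2⟩
        · rintro c ⟨m1, m2⟩
          exact h1.mO' c ⟨by omega, m2⟩
      have hG3 : ruleF i2 j a2 b i i2 a b = ((i,j,a,b),(i2,j,a2,a)) := by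
        rw [ruleF, if_neg hij, if_neg hi2j, if_neg (Ne.symm hi2i), if_pos rfl,
          if_pos (show dz a2 a < dz a2 b by omega)]
      simp only [hr]
      exact ⟨hG1, hG2, hG3, fun hcon => hi2i (congrArg Prod.fst hcon)⟩
  by_cases hc3 : i2 = i
  · rw [hc3] at h2 ⊢
    have ha2 : a2 = b := by rw [← h2.hxi, h1.hyi]
    rw [ha2] at h2 ⊢
    have hij2 : i ≠ j2 := h2.hij
    have hbb2 : b ≠ b2 := h2.hab
    have hj2j : j2 ≠ j := hc2
    have hj2i : j2 ≠ i := Ne.symm hij2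
    have hxj2 : x j2 = b2 := (h1.agree j2 hj2i hj2j).trans h2.hxj
    have hab2 : a ≠ b2 := by
      rw [← h1.hxi, ← hxj2]; exact fun hh => hij2 (x.injective hh)
    have hpij := Nat.pos_of_ne_zero (dz_pos hij)
    have hpij2 := Nat.pos_of_ne_zero (dz_pos hij2)
    have hpab := Nat.pos_of_ne_zero (dz_pos hab)
    have hpbb2 := Nat.pos_of_ne_zero (dz_pos hbb2)
    have hpab2 := Nat.pos_of_ne_zero (dz_pos hab2)
    have hjj2 : j ≠ j2 := Ne.symm hj2j
    have hrsum : dz a b + dz b b2 = dz a b2 := by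
      rcases dz_add a b b2 with h5 | h5
      · exact h5
      · exfalso
        have hm1 := h1.mX' i
        have hm2 := h2.mX' i
        simp only [dz_self] at hm1 hm2
        have r := dz_add a b (σX i)
        have l1 := dz_lt a (σX i)
        have l2 := dz_lt b (σX i)
        have l3 := dz_lt a b2
        omega
    have hdne := dz_ne (w := i) hjj2
    by_cases hd : dz i j2 < dz i j
    · -- branch 3A : r1' = (i,j2,a,b2), r2' = (j2,j,a,b)
      have hr : ruleF i j a b i j2 b b2 = ((i,j2,a,b2),(j2,j,a,b)) := by
        rw [ruleF, if_neg hij, if_neg hc2, if_pos rfl, if_pos hd]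
      have hcsum : dz i j2 + dz j2 j = dz i j := by
        have r := dz_add i j2 j; have := dz_lt j2 j; omega
      have hG1 : RP σX σO x (Equiv.swap a b2 * x) i j2 a b2 := by
        refine RP.of_dz hij2 hab2 h1.hxi hxj2 ?_ ?_ ?_ ?_ ?_ ?_
        · rw [swap_eval, h1.hxi, Equiv.swap_apply_left]
        · rw [swap_eval, hxj2, Equiv.swap_apply_right]
        · intro k hki hkj2
          rw [swap_eval,
            Equiv.swap_apply_of_ne_of_ne (xk_ne h1.hxi hki) (xk_ne hxj2 hkj2)]
        · rintro k ⟨⟨e1, e2⟩, e3, e4⟩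
          have hki : k ≠ i := fun e => e2 (by rw [e, dz_self])
          by_cases hkj : k = j
          · rw [hkj] at e1; omega
          by_cases hkj2 : k = j2
          · rw [hkj2] at e1; omega
          · have hE1 := h1.empty' k
            have hE2 := h2.empty' k
            rw [← h1.agree k hki hkj] at hE2
            have r2 := dz_add a b (x k)
            have l1 := dz_lt a (x k)
            have l2 := dz_lt b (x k)
            have hneb := dz_ne (w := a) (xk_ne h1.hxj hkj)
            omega
        · rintro c ⟨m1, m2⟩
          have q1 := h1.mX' c
          have q2 := h2.mX' c
          have r := dz_add a b (σX c)
          have l1 := dz_lt a (σX c)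
          have l2 := dz_lt b (σX c)
          omega
        · rintro c ⟨m1, m2⟩
          have q1 := h1.mO' c
          have q2 := h2.mO' c
          have r := dz_add a b (σO c)
          have l1 := dz_lt a (σO c)
          have l2 := dz_lt b (σO c)
          omega
      have hG2 : RP σX σO (Equiv.swap a b2 * x) z j2 j a b := by
        refine RP.of_dz hj2j hab ?_ ?_ h2.hyj ?_ ?_ ?_ ?_ ?_
        · rw [swap_eval, hxj2, Equiv.swap_apply_right]
        · rw [swap_eval, h1.hxj,
            Equiv.swap_apply_of_ne_of_ne (Ne.symm hab) hbb2]
        · rw [← h2.agree j (Ne.symm hij) hjj2]; exact h1.hyj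
        · intro k hkj2 hkj
          by_cases hki : k = i
          · rw [hki]
            rw [swap_eval, h1.hxi, Equiv.swap_apply_left, h2.hyi]
          · rw [swap_eval,
              Equiv.swap_apply_of_ne_of_ne (xk_ne h1.hxi hki) (xk_ne hxj2 hkj2),
              h1.agree k hki hkj, h2.agree k hki hkj2]
        · rintro k ⟨⟨e1, e2⟩, e3, e4⟩
          have hkj2 : k ≠ j2 := fun e => e2 (by rw [e, dz_self])
          by_cases hki : k = i
          · rw [hki] at e1
            have rr := dz_add i j2 i
            simp only [dz_self] at rr
            have := dz_lt i j
            have := dz_lt j2 i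
            have := Nat.pos_of_ne_zero (dz_pos (Ne.symm hij2))
            omega
          by_cases hkj : k = j
          · rw [hkj] at e1; omega
          · rw [swap_eval,
              Equiv.swap_apply_of_ne_of_ne (xk_ne h1.hxi hki) (xk_ne hxj2 hkj2)]
              at e3 e4
            have hE1 := h1.empty' k
            have r := dz_add i j2 k
            have l1 := dz_lt i k
            have l2 := dz_lt j2 k
            have l3 := dz_pos (Ne.symm hki)
            omega
        · rintro c ⟨m1, m2⟩
          have q1 := h1.mX' c
          have r := dz_add i j2 c
          have l1 := dz_lt i c
          have l2 := dz_lt j2 c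
          omega
        · rintro c ⟨m1, m2⟩
          have q1 := h1.mO' c
          have r := dz_add i j2 c
          have l1 := dz_lt i c
          have l2 := dz_lt j2 c
          omega
      have hG3 : ruleF i j2 a b2 j2 j a b = ((i,j,a,b),(i,j2,b,b2)) := by
        rw [ruleF, if_pos rfl, if_neg (show ¬(dz a b2 < dz a b) by omega)]
      simp only [hr]
      exact ⟨hG1, hG2, hG3,
        fun hcon => hj2j (congrArg (fun t : Q4 n => t.2.1) hcon)⟩
    · -- branch 3B : r1' = (j,j2,b,b2), r2' = (i,j,a,b2)
      have hr : ruleF i j a b i j2 b b2 = ((j,j2,b,b2),(i,j,a,b2)) := by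
        rw [ruleF, if_neg hij, if_neg hc2, if_pos rfl, if_neg hd]
      have hcsum : dz i j + dz j j2 = dz i j2 := by
        have r := dz_add i j j2; have := dz_lt j j2; omega
      have hG1 : RP σX σO x (Equiv.swap b b2 * x) j j2 b b2 := by
        refine RP.of_dz hjj2 hbb2 h1.hxj hxj2 ?_ ?_ ?_ ?_ ?_ ?_
        · rw [swap_eval, h1.hxj, Equiv.swap_apply_left]
        · rw [swap_eval, hxj2, Equiv.swap_apply_right]
        · intro k hkj hkj2
          rw [swap_eval,
            Equiv.swap_apply_of_ne_of_ne (xk_ne h1.hxj hkj) (xk_ne hxj2 hkj2)]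
        · rintro k ⟨⟨e1, e2⟩, e3, e4⟩
          have hkj : k ≠ j := fun e => e2 (by rw [e, dz_self])
          by_cases hki : k = i
          · rw [hki] at e1
            have rr := dz_add i j i
            simp only [dz_self] at rr
            have := dz_lt i j2
            have := dz_lt j i
            have := Nat.pos_of_ne_zero (dz_pos (Ne.symm hij))
            omega
          by_cases hkj2 : k = j2
          · rw [hkj2] at e1; omega
          · have hE2 := h2.empty' k
            rw [← h1.agree k hki hkj] at hE2
            have r := dz_add i j k
            have l1 := dz_lt i k
            have l2 := dz_lt j k
            have l3 := dz_pos (Ne.symm hki)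
            omega
        · rintro c ⟨m1, m2⟩
          have q2 := h2.mX' c
          have r := dz_add i j c
          have l1 := dz_lt i c
          have l2 := dz_lt j c
          omega
        · rintro c ⟨m1, m2⟩
          have q2 := h2.mO' c
          have r := dz_add i j c
          have l1 := dz_lt i c
          have l2 := dz_lt j c
          omega
      have hG2 : RP σX σO (Equiv.swap b b2 * x) z i j a b2 := by
        refine RP.of_dz hij hab2 ?_ ?_ h2.hyi ?_ ?_ ?_ ?_ ?_
        · rw [swap_eval, h1.hxi,
            Equiv.swap_apply_of_ne_of_ne hab hab2]
        · rw [swap_eval, h1.hxj, Equiv.swap_apply_left]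
        · rw [← h2.agree j (Ne.symm hij) hjj2]; exact h1.hyj
        · intro k hki hkj
          by_cases hkj2 : k = j2
          · rw [hkj2]
            rw [swap_eval, hxj2, Equiv.swap_apply_right, h2.hyj]
          · rw [swap_eval,
              Equiv.swap_apply_of_ne_of_ne (xk_ne h1.hxj hkj) (xk_ne hxj2 hkj2),
              h1.agree k hki hkj, h2.agree k hki hkj2]
        · rintro k ⟨⟨e1, e2⟩, e3, e4⟩
          have hki : k ≠ i := fun e => e2 (by rw [e, dz_self])
          by_cases hkj : k = j
          · rw [hkj] at e1; omega
          by_cases hkj2 : k = j2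
          · rw [hkj2] at e1; omega
          · rw [swap_eval,
              Equiv.swap_apply_of_ne_of_ne (xk_ne h1.hxj hkj) (xk_ne hxj2 hkj2)]
              at e3 e4
            have hE1 := h1.empty' k
            have hE2 := h2.empty' k
            rw [← h1.agree k hki hkj] at hE2
            have r2 := dz_add a b (x k)
            have l1 := dz_lt a (x k)
            have l2 := dz_lt b (x k)
            have hneb := dz_ne (w := a) (xk_ne h1.hxj hkj)
            omega
        · rintro c ⟨m1, m2⟩
          have q1 := h1.mX' c
          have q2 := h2.mX' c
          have r := dz_add a b (σX c)
          have l1 := dz_lt a (σX c)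
          have l2 := dz_lt b (σX c)
          omega
        · rintro c ⟨m1, m2⟩
          have q1 := h1.mO' c
          have q2 := h2.mO' c
          have r := dz_add a b (σO c)
          have l1 := dz_lt a (σO c)
          have l2 := dz_lt b (σO c)
          omega
      have hG3 : ruleF j j2 b b2 i j a b2 = ((i,j,a,b),(i,j2,b,b2)) := by
        have rr := dz_add a b a
        simp only [dz_self] at rr
        have l1 := dz_lt a b2
        rw [ruleF, if_neg hij2, if_neg hjj2, if_neg hij, if_pos rfl,
          if_neg (show ¬(dz b a < dz b b2) by omega)]
      simp only [hr]
      exact ⟨hG1, hG2, hG3, fun hcon => hij (congrArg Prod.fst hcon).symm⟩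
  by_cases hc4 : j2 = i
  · rw [hc4] at h2 ⊢
    have hb2 : b2 = b := by rw [← h2.hxj, h1.hyi]
    rw [hb2] at h2 ⊢
    have hi2i : i2 ≠ i := h2.hij
    have ha2b : a2 ≠ b := h2.hab
    have hi2j : i2 ≠ j := hc1
    have hxi2 : x i2 = a2 := (h1.agree i2 hi2i hi2j).trans h2.hxi
    have ha2a : a2 ≠ a := by
      rw [← hxi2, ← h1.hxi]; exact fun hh => hi2i (x.injective hh)
    have hpij := Nat.pos_of_ne_zero (dz_pos hij)
    have hpi2i := Nat.pos_of_ne_zero (dz_pos hi2i)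
    have hpab := Nat.pos_of_ne_zero (dz_pos hab)
    have hpa2b := Nat.pos_of_ne_zero (dz_pos ha2b)
    have hpa2a := Nat.pos_of_ne_zero (dz_pos ha2a)
    have hpaa2 := Nat.pos_of_ne_zero (dz_pos (Ne.symm ha2a))
    have hli2j := dz_lt i2 j
    have hlab4 := dz_lt a b
    have hla2b := dz_lt a2 b
    have hcsum : dz i2 i + dz i j = dz i2 j := by
      rcases dz_add i2 i j with h5 | h5
      · exact h5
      · exfalso
        set c0 := σX.symm (b - 1) with hc0
        have hsX : σX c0 = b - 1 := Equiv.apply_symm_apply _ _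
        have hm1 := h1.mX' c0
        have hm2 := h2.mX' c0
        rw [hsX] at hm1 hm2
        rw [dz_pred hab] at hm1
        rw [dz_pred ha2b] at hm2
        have h6 := dz_add i2 i c0
        have h9 := dz_lt i2 c0
        have h10 := dz_lt i c0
        have h11 := dz_lt i2 j
        omega
    have hrne := dz_ne (w := a) (Ne.symm ha2b)
    by_cases hd : dz a a2 < dz a b
    · -- branch 4A : r1' = (i2,j,a2,b), r2' = (i,j,a,a2)
      have hr : ruleF i j a b i2 i a2 b = ((i2,j,a2,b),(i,j,a,a2)) := by
        rw [ruleF, if_neg hc1, if_neg hij, if_neg hi2i, if_pos rfl, if_pos hd]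
      have hrsum : dz a a2 + dz a2 b = dz a b := by
        have r := dz_add a a2 b; have := dz_lt a2 b; omega
      have rrc : dz i2 i + dz i i2 = n := by
        have rr := dz_add i2 i i2
        simp only [dz_self] at rr
        have := Nat.pos_of_ne_zero (dz_pos (Ne.symm hi2i))
        omega
      have hG1 : RP σX σO x (Equiv.swap a2 b * x) i2 j a2 b := by
        refine RP.of_dz hi2j ha2b hxi2 h1.hxj ?_ ?_ ?_ ?_ ?_ ?_
        · rw [swap_eval, hxi2, Equiv.swap_apply_left]
        · rw [swap_eval, h1.hxj, Equiv.swap_apply_right]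
        · intro k hki2 hkj
          rw [swap_eval,
            Equiv.swap_apply_of_ne_of_ne (xk_ne hxi2 hki2) (xk_ne h1.hxj hkj)]
        · rintro k ⟨⟨e1, e2⟩, e3, e4⟩
          have hki2 : k ≠ i2 := fun e => e2 (by rw [e, dz_self])
          by_cases hki : k = i
          · rw [hki] at e3 e4
            rw [h1.hxi] at e3 e4
            have rr := dz_add a a2 a
            simp only [dz_self] at rr
            have := dz_lt a2 a
            have := dz_lt a a2
            omega
          by_cases hkj : k = j
          · rw [hkj] at e1; omega
          · have hE1 := h1.empty' k
            have hE2 := h2.empty' k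
            rw [← h1.agree k hki hkj] at hE2
            have r1 := dz_add i2 i k
            have r2 := dz_add a a2 (x k)
            have l1 := dz_lt i2 k
            have l2 := dz_lt i k
            have l3 := dz_lt a (x k)
            have l4 := dz_lt a2 (x k)
            have l5 := dz_pos (Ne.symm hki)
            omega
        · rintro c ⟨m1, m2⟩
          have q1 := h1.mX' c
          have q2 := h2.mX' c
          have r1 := dz_add i2 i c
          have r2 := dz_add a a2 (σX c)
          have l1 := dz_lt i2 c
          have l0 := dz_lt i c
          have l2 := dz_lt a (σX c)
          have l3 := dz_lt a2 (σX c)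
          omega
        · rintro c ⟨m1, m2⟩
          have q1 := h1.mO' c
          have q2 := h2.mO' c
          have r1 := dz_add i2 i c
          have r2 := dz_add a a2 (σO c)
          have l1 := dz_lt i2 c
          have l0 := dz_lt i c
          have l2 := dz_lt a (σO c)
          have l3 := dz_lt a2 (σO c)
          omega
      have hG2 : RP σX σO (Equiv.swap a2 b * x) z i j a a2 := by
        refine RP.of_dz hij (Ne.symm ha2a) ?_ ?_ h2.hyj ?_ ?_ ?_ ?_ ?_
        · rw [swap_eval, h1.hxi,
            Equiv.swap_apply_of_ne_of_ne (Ne.symm ha2a) hab]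
        · rw [swap_eval, h1.hxj, Equiv.swap_apply_right]
        · rw [← h2.agree j (Ne.symm hi2j) (Ne.symm hij)]; exact h1.hyj
        · intro k hki hkj
          by_cases hki2 : k = i2
          · rw [hki2]
            rw [swap_eval, hxi2, Equiv.swap_apply_left, h2.hyi]
          · rw [swap_eval,
              Equiv.swap_apply_of_ne_of_ne (xk_ne hxi2 hki2) (xk_ne h1.hxj hkj),
              h1.agree k hki hkj, h2.agree k hki2 hki]
        · rintro k ⟨⟨e1, e2⟩, e3, e4⟩
          have hki : k ≠ i := fun e => e2 (by rw [e, dz_self])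
          by_cases hki2 : k = i2
          · rw [hki2] at e1
            have := dz_lt i2 j
            omega
          by_cases hkj : k = j
          · rw [hkj] at e1; omega
          · rw [swap_eval,
              Equiv.swap_apply_of_ne_of_ne (xk_ne hxi2 hki2) (xk_ne h1.hxj hkj)]
              at e3 e4
            have hE1 := h1.empty' k
            omega
        · rintro c ⟨m1, m2⟩
          exact h1.mX' c ⟨m1, by omega⟩
        · rintro c ⟨m1, m2⟩
          exact h1.mO' c ⟨m1, by omega⟩
      have hG3 : ruleF i2 j a2 b i j a a2 = ((i,j,a,b),(i2,i,a2,b)) := by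
        rw [ruleF, if_neg hij, if_pos rfl,
          if_neg (show ¬(dz i i2 < dz i j) by omega)]
      simp only [hr]
      exact ⟨hG1, hG2, hG3, fun hcon => hi2i (congrArg Prod.fst hcon)⟩
    · -- branch 4B : r1' = (i2,i,a2,a), r2' = (i2,j,a,b)
      have hr : ruleF i j a b i2 i a2 b = ((i2,i,a2,a),(i2,j,a,b)) := by
        rw [ruleF, if_neg hc1, if_neg hij, if_neg hi2i, if_pos rfl, if_neg hd]
      have rrr : dz a a2 + dz a2 a = n := by
        have rr := dz_add a a2 a
        simp only [dz_self] at rr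
        omega
      have hd' : dz a b < dz a a2 := by omega
      have hrsum2 : dz a2 a + dz a b = dz a2 b := by
        have r := dz_add a2 a b
        have := dz_lt a2 b
        omega
      have hG1 : RP σX σO x (Equiv.swap a2 a * x) i2 i a2 a := by
        refine RP.of_dz hi2i ha2a hxi2 h1.hxi ?_ ?_ ?_ ?_ ?_ ?_
        · rw [swap_eval, hxi2, Equiv.swap_apply_left]
        · rw [swap_eval, h1.hxi, Equiv.swap_apply_right]
        · intro k hki2 hki
          rw [swap_eval,
            Equiv.swap_apply_of_ne_of_ne (xk_ne hxi2 hki2) (xk_ne h1.hxi hki)]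
        · rintro k ⟨⟨e1, e2⟩, e3, e4⟩
          have hki2 : k ≠ i2 := fun e => e2 (by rw [e, dz_self])
          by_cases hkj : k = j
          · rw [hkj] at e3 e4
            rw [h1.hxj] at e3 e4
            omega
          by_cases hki : k = i
          · rw [hki] at e1; omega
          · have hE2 := h2.empty' k
            rw [← h1.agree k hki hkj] at hE2
            omega
        · rintro c ⟨m1, m2⟩
          exact h2.mX' c ⟨by omega, by omega⟩
        · rintro c ⟨m1, m2⟩
          exact h2.mO' c ⟨by omega, by omega⟩
      have hG2 : RP σX σO (Equiv.swap a2 a * x) z i2 j a b := by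
        refine RP.of_dz hi2j hab ?_ ?_ h2.hyi ?_ ?_ ?_ ?_ ?_
        · rw [swap_eval, hxi2, Equiv.swap_apply_left]
        · rw [swap_eval, h1.hxj,
            Equiv.swap_apply_of_ne_of_ne (Ne.symm ha2b) (Ne.symm hab)]
        · rw [← h2.agree j (Ne.symm hi2j) (Ne.symm hij)]; exact h1.hyj
        · intro k hki2 hkj
          by_cases hki : k = i
          · rw [hki]
            rw [swap_eval, h1.hxi, Equiv.swap_apply_right, h2.hyj]
          · rw [swap_eval,
              Equiv.swap_apply_of_ne_of_ne (xk_ne hxi2 hki2) (xk_ne h1.hxi hki),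
              h1.agree k hki hkj, h2.agree k hki2 hki]
        · rintro k ⟨⟨e1, e2⟩, e3, e4⟩
          have hki2 : k ≠ i2 := fun e => e2 (by rw [e, dz_self])
          by_cases hki : k = i
          · rw [hki] at e3 e4
            rw [swap_eval, h1.hxi, Equiv.swap_apply_right] at e3 e4
            omega
          by_cases hkj : k = j
          · rw [hkj] at e1; omega
          · rw [swap_eval,
              Equiv.swap_apply_of_ne_of_ne (xk_ne hxi2 hki2) (xk_ne h1.hxi hki)]
              at e3 e4
            have hE1 := h1.empty' k
            have hE2 := h2.empty' k
            rw [← h1.agree k hki hkj] at hE2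
            have r1 := dz_add i2 i k
            have r2 := dz_add a2 a (x k)
            have l1 := dz_lt i2 k
            have l2 := dz_lt i k
            have l3 := dz_lt a2 (x k)
            have l4 := dz_lt a (x k)
            have l5 := dz_pos (Ne.symm hki)
            omega
        · rintro c ⟨m1, m2⟩
          have q1 := h1.mX' c
          have q2 := h2.mX' c
          have r1 := dz_add i2 i c
          have r2 := dz_add a2 a (σX c)
          have l1 := dz_lt i c
          have l2 := dz_lt a2 (σX c)
          have l3 := dz_lt a (σX c)
          omega
        · rintro c ⟨m1, m2⟩
          have q1 := h1.mO' c
          have q2 := h2.mO' c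
          have r1 := dz_add i2 i c
          have r2 := dz_add a2 a (σO c)
          have l1 := dz_lt i c
          have l2 := dz_lt a2 (σO c)
          have l3 := dz_lt a (σO c)
          omega
      have hG3 : ruleF i2 i a2 a i2 j a b = ((i,j,a,b),(i2,i,a2,b)) := by
        rw [ruleF, if_neg hi2i, if_neg (Ne.symm hij), if_pos rfl,
          if_neg (show ¬(dz i2 j < dz i2 i) by omega)]
      simp only [hr]
      exact ⟨hG1, hG2, hG3, fun hcon => hi2i (congrArg Prod.fst hcon)⟩
  · -- disjoint columns
    have hi2j2 : i2 ≠ j2 := h2.hij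
    have ha2b2 : a2 ≠ b2 := h2.hab
    have hii2 : i ≠ i2 := fun h => hc3 h.symm
    have hij2' : i ≠ j2 := fun h => hc4 h.symm
    have hji2 : j ≠ i2 := fun h => hc1 h.symm
    have hjj2 : j ≠ j2 := fun h => hc2 h.symm
    have hxi2 : x i2 = a2 := (h1.agree i2 hc3 hc1).trans h2.hxi
    have hxj2 : x j2 = b2 := (h1.agree j2 hc4 hc2).trans h2.hxj
    have haa2 : a ≠ a2 := by
      rw [← h1.hxi, ← hxi2]; exact fun hh => hii2 (x.injective hh)
    have hab2v : a ≠ b2 := by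
      rw [← h1.hxi, ← hxj2]; exact fun hh => hij2' (x.injective hh)
    have hba2 : b ≠ a2 := by
      rw [← h1.hxj, ← hxi2]; exact fun hh => hji2 (x.injective hh)
    have hbb2 : b ≠ b2 := by
      rw [← h1.hxj, ← hxj2]; exact fun hh => hjj2 (x.injective hh)
    have hr : ruleF i j a b i2 j2 a2 b2 = ((i2,j2,a2,b2),(i,j,a,b)) := by
      rw [ruleF, if_neg hc1, if_neg hc2, if_neg hc3, if_neg hc4]
    have hG1 : RP σX σO x (Equiv.swap a2 b2 * x) i2 j2 a2 b2 := by
      refine RP.of_dz hi2j2 ha2b2 hxi2 hxj2 ?_ ?_ ?_ ?_ ?_ ?_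
      · rw [swap_eval, hxi2, Equiv.swap_apply_left]
      · rw [swap_eval, hxj2, Equiv.swap_apply_right]
      · intro k hki2 hkj2
        rw [swap_eval,
          Equiv.swap_apply_of_ne_of_ne (xk_ne hxi2 hki2) (xk_ne hxj2 hkj2)]
      · rintro k ⟨⟨e1, e2⟩, e3, e4⟩
        have hki2 : k ≠ i2 := fun e => e2 (by rw [e, dz_self])
        by_cases hki : k = i
        · rw [hki] at e1 e2 e3 e4
          rw [h1.hxi] at e3 e4
          have hE2j := h2.empty' j
          rw [h1.hyj] at hE2j
          have hE2i := h2.empty' i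
          rw [h1.hyi] at hE2i
          have hE1j2 := h1.empty' j2
          rw [hxj2] at hE1j2
          have r1 := dz_add i2 i j
          have r2 := dz_add i2 i j2
          have s1 := dz_add a2 a b
          have s2 := dz_add a2 a b2
          have nej := dz_ne (w := i) hjj2
          have neb := dz_ne (w := a) hbb2
          have p1 := dz_pos hc1
          have p2 := dz_pos hab2v
          have p3 := dz_pos (Ne.symm hba2)
          have p4 := dz_pos hij2'
          have p5 := Nat.pos_of_ne_zero (dz_pos hab)
          have l0 := dz_lt i2 j2
          have l1 := dz_lt i j2
          have l2 := dz_lt i j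
          have l3 := dz_lt a b2
          have l4 := dz_lt a b
          have l5 := dz_lt i2 j
          have l6 := dz_lt a2 b
          omega
        by_cases hkj : k = j
        · rw [hkj] at e1 e2 e3 e4
          rw [h1.hxj] at e3 e4
          have hE2i := h2.empty' i
          rw [h1.hyi] at hE2i
          have hE2j := h2.empty' j
          rw [h1.hyj] at hE2j
          have hE1i2 := h1.empty' i2
          rw [hxi2] at hE1i2
          have r := dz_add i i2 j
          have rr := dz_add i i2 i
          simp only [dz_self] at rr
          have s := dz_add a a2 b
          have ss := dz_add a a2 a
          simp only [dz_self] at ss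
          have p1 := dz_pos hii2
          have p2 := dz_pos haa2
          have p3 := dz_pos (Ne.symm haa2)
          have p4 := dz_pos (Ne.symm hii2)
          have p5 := Nat.pos_of_ne_zero (dz_pos hij)
          have p6 := Nat.pos_of_ne_zero (dz_pos hab)
          have l1 := dz_lt i j
          have l2 := dz_lt i i2
          have l3 := dz_lt a b
          have l4 := dz_lt a a2
          have l5 := dz_lt i2 i
          have l6 := dz_lt a2 a
          omega
        · have hE2 := h2.empty' k
          rw [← h1.agree k hki hkj] at hE2
          exact hE2 ⟨⟨e1, e2⟩, e3, e4⟩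
      · rintro c m
        exact h2.mX' c m
      · rintro c m
        exact h2.mO' c m
    have hG2 : RP σX σO (Equiv.swap a2 b2 * x) z i j a b := by
      refine RP.of_dz hij hab ?_ ?_ ?_ ?_ ?_ ?_ ?_ ?_
      · rw [swap_eval, h1.hxi,
          Equiv.swap_apply_of_ne_of_ne haa2 hab2v]
      · rw [swap_eval, h1.hxj,
          Equiv.swap_apply_of_ne_of_ne hba2 hbb2]
      · rw [← h2.agree i hii2 hij2']; exact h1.hyi
      · rw [← h2.agree j hji2 hjj2]; exact h1.hyj
      · intro k hki hkj
        by_cases hki2 : k = i2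
        · rw [hki2]
          rw [swap_eval, hxi2, Equiv.swap_apply_left, h2.hyi]
        by_cases hkj2 : k = j2
        · rw [hkj2]
          rw [swap_eval, hxj2, Equiv.swap_apply_right, h2.hyj]
        · rw [swap_eval,
            Equiv.swap_apply_of_ne_of_ne (xk_ne hxi2 hki2) (xk_ne hxj2 hkj2),
            h1.agree k hki hkj, h2.agree k hki2 hkj2]
      · rintro k ⟨⟨e1, e2⟩, e3, e4⟩
        have hki : k ≠ i := fun e => e2 (by rw [e, dz_self])
        by_cases hki2 : k = i2
        · rw [hki2] at e1 e2 e3 e4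
          rw [swap_eval, hxi2, Equiv.swap_apply_left] at e3 e4
          have hE1i2 := h1.empty' i2
          rw [hxi2] at hE1i2
          have hE1j2 := h1.empty' j2
          rw [hxj2] at hE1j2
          have hE2j := h2.empty' j
          rw [h1.hyj] at hE2j
          have r2c := dz_add i i2 j
          have r3c := dz_add i i2 j2
          have s2r := dz_add a2 a b2
          have ss := dz_add a a2 a
          simp only [dz_self] at ss
          have nec := dz_ne (w := i2) hjj2
          have p1 := dz_pos haa2
          have p2 := dz_pos (Ne.symm haa2)
          have p3 := dz_pos hc1
          have p4 := dz_pos hij2'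
          have p5 := Nat.pos_of_ne_zero (dz_pos hab)
          have l9 := dz_lt i2 j
          have l1 := dz_lt a b
          have l2 := dz_lt a b2
          have l3 := dz_lt a2 a
          have l4 := dz_lt i j
          have l5 := dz_lt i j2
          have l6 := dz_lt i2 j2
          have l7 := dz_lt i i2
          have l8 := dz_lt a2 b2
          omega
        by_cases hkj2 : k = j2
        · rw [hkj2] at e1 e2 e3 e4
          rw [swap_eval, hxj2, Equiv.swap_apply_right] at e3 e4
          have hE1i2 := h1.empty' i2
          rw [hxi2] at hE1i2
          have hE1j2 := h1.empty' j2
          rw [hxj2] at hE1j2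
          have hE2i := h2.empty' i
          rw [h1.hyi] at hE2i
          have rr := dz_add i i2 i
          simp only [dz_self] at rr
          have rc := dz_add i2 i j2
          have s := dz_add a a2 b
          have s2 := dz_add a a2 b2
          have neb := dz_ne (w := a) hbb2
          have p1 := dz_pos hii2
          have p2 := dz_pos (Ne.symm hii2)
          have p3 := dz_pos (Ne.symm hba2)
          have p4 := dz_pos haa2
          have p5 := Nat.pos_of_ne_zero (dz_pos hab)
          have l1 := dz_lt a b
          have l2 := dz_lt a b2
          have l3 := dz_lt a a2
          have l4 := dz_lt i j
          have l5 := dz_lt i2 i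
          have l6 := dz_lt i2 j2
          have l7 := dz_lt i i2
          have l8 := dz_lt a2 b
          omega
        by_cases hkj : k = j
        · rw [hkj] at e1; omega
        · rw [swap_eval,
            Equiv.swap_apply_of_ne_of_ne (xk_ne hxi2 hki2) (xk_ne hxj2 hkj2)]
            at e3 e4
          exact h1.empty' k ⟨⟨e1, e2⟩, e3, e4⟩
      · rintro c m
        exact h1.mX' c m
      · rintro c m
        exact h1.mO' c m
    have hG3 : ruleF i2 j2 a2 b2 i j a b = ((i,j,a,b),(i2,j2,a2,b2)) := by
      rw [ruleF, if_neg hij2', if_neg hjj2, if_neg hii2, if_neg hji2]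
    simp only [hr]
    exact ⟨hG1, hG2, hG3, fun hcon => hc3 (congrArg Prod.fst hcon)⟩
end Grid13


open Grid13 in
/-- `∂̃ ∘ ∂̃ = 0` for the fully blocked grid differential over `𝔽₂`, expressed
on basis elements: for all grid states `x`, `z`, the number of ways to get from
`x` to `z` by a juxtaposition of two empty rectangles avoiding all markings is
even. -/
theorem stmt13 (n : ℕ) [NeZero n] (σX σO : Equiv.Perm (ZMod n))
    (hXO : ∀ i, σX i ≠ σO i) (x z : Equiv.Perm (ZMod n)) :
    (∑ y : Equiv.Perm (ZMod n),
        (emptyRectCount σX σO x y : ZMod 2) * (emptyRectCount σX σO y z : ZMod 2))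
      = 0 := by
  classical
  set F : Equiv.Perm (ZMod n) → Equiv.Perm (ZMod n) → Finset (Q4 n) := fun u v =>
    (Finset.univ : Finset (Q4 n)).filter
    (fun q =>
      q.1 ≠ q.2.1 ∧ q.2.2.1 ≠ q.2.2.2 ∧
      u q.1 = q.2.2.1 ∧ u q.2.1 = q.2.2.2 ∧
      v q.1 = q.2.2.2 ∧ v q.2.1 = q.2.2.1 ∧
      (∀ k, k ≠ q.1 → k ≠ q.2.1 → u k = v k) ∧
      (∀ k, ¬((cycMem q.1 q.2.1 k ∧ k ≠ q.1) ∧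
              (cycMem q.2.2.1 q.2.2.2 (u k) ∧ u k ≠ q.2.2.1))) ∧
      (∀ c, ¬(cycMem q.1 q.2.1 c ∧ cycMem q.2.2.1 q.2.2.2 (σX c))) ∧
      (∀ c, ¬(cycMem q.1 q.2.1 c ∧ cycMem q.2.2.1 q.2.2.2 (σO c)))) with hF
  have hmem : ∀ (u v : Equiv.Perm (ZMod n)) (q : Q4 n),
      q ∈ F u v ↔ RP σX σO u v q.1 q.2.1 q.2.2.1 q.2.2.2 := by
    intro u v q
    rw [hF]
    simp only [Finset.mem_filter, Finset.mem_univ, true_and]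
    constructor
    · rintro ⟨a1,a2,a3,a4,a5,a6,a7,a8,a9,a10⟩; exact ⟨a1,a2,a3,a4,a5,a6,a7,a8,a9,a10⟩
    · rintro ⟨a1,a2,a3,a4,a5,a6,a7,a8,a9,a10⟩; exact ⟨a1,a2,a3,a4,a5,a6,a7,a8,a9,a10⟩
  have hcount : ∀ u v, emptyRectCount σX σO u v = (F u v).card := fun u v => rfl
  calc (∑ y : Equiv.Perm (ZMod n),
        (emptyRectCount σX σO x y : ZMod 2) * (emptyRectCount σX σO y z : ZMod 2))
      = ∑ y : Equiv.Perm (ZMod n), ∑ p ∈ (F x y) ×ˢ (F y z), (1 : ZMod 2) := by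
        refine Finset.sum_congr rfl fun y _ => ?_
        rw [hcount, hcount, Finset.sum_const, Finset.card_product]
        push_cast
        ring
    _ = ∑ t ∈ (Finset.univ : Finset (Equiv.Perm (ZMod n))).sigma
          (fun y => (F x y) ×ˢ (F y z)), (1 : ZMod 2) := by
        rw [Finset.sum_sigma]
    _ = 0 := by
        refine Finset.sum_involution
          (fun t _ => ⟨Equiv.swap (ruleF t.2.1.1 t.2.1.2.1 t.2.1.2.2.1 t.2.1.2.2.2
              t.2.2.1 t.2.2.2.1 t.2.2.2.2.1 t.2.2.2.2.2).1.2.2.1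
              (ruleF t.2.1.1 t.2.1.2.1 t.2.1.2.2.1 t.2.1.2.2.2
              t.2.2.1 t.2.2.2.1 t.2.2.2.2.1 t.2.2.2.2.2).1.2.2.2 * x,
            (ruleF t.2.1.1 t.2.1.2.1 t.2.1.2.2.1 t.2.1.2.2.2
              t.2.2.1 t.2.2.2.1 t.2.2.2.2.1 t.2.2.2.2.2)⟩)
          (fun t ht => by decide)
          ?_ ?_ ?_
        · -- g t ≠ t
          rintro ⟨y, q1, q2⟩ ht _
          simp only [Finset.mem_sigma, Finset.mem_univ, Finset.mem_product, true_and] at ht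
          obtain ⟨h1, h2⟩ := ht
          rw [hmem] at h1 h2
          have hs := step σX σO x y z hXO h1 h2
          intro hcon
          apply hs.2.2.2
          have := congrArg (fun t : (_ : Equiv.Perm (ZMod n)) × (Q4 n × Q4 n) => t.2.1) hcon
          simpa using this
        · -- g t ∈ S
          rintro ⟨y, q1, q2⟩ ht
          simp only [Finset.mem_sigma, Finset.mem_univ, Finset.mem_product, true_and] at ht ⊢
          obtain ⟨h1, h2⟩ := ht
          rw [hmem] at h1 h2
          have hs := step σX σO x y z hXO h1 h2
          exact ⟨(hmem _ _ _).mpr hs.1, (hmem _ _ _).mpr hs.2.1⟩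
        · -- involutive
          rintro ⟨y, ⟨i,j,a,b⟩, ⟨i2,j2,a2,b2⟩⟩ ht
          simp only [Finset.mem_sigma, Finset.mem_univ, Finset.mem_product, true_and] at ht
          obtain ⟨h1, h2⟩ := ht
          rw [hmem] at h1 h2
          have hs := step σX σO x y z hXO h1 h2
          have h31 := hs.2.2.1
          simp only []
          rw [h31]
          have hy : Equiv.swap a b * x = y := (h1.y_eq).symm
          simp [hy]
end
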